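/- arXiv:2310.06759 — 5 statements merged into one kernel-verified Lean document; each statement's English description precedes it below -/
import Mathlib

section
/- There exists a Wang tile set S that admits a tiling of the plane and such that every tiling of the plane by S is nonperiodic; that is, there exists an aperiodic Wang tile set (Berger). -/
/-- A Wang tile: the colours of its (west, south, east, north) edges. -/
abbrev WangTile : Type := ℕ × ℕ × ℕ × ℕ

def WangTile.west (t : WangTile) : ℕ := t.1
def WangTile.south (t : WangTile) : ℕ := t.2.1
def WangTile.east (t : WangTile) : ℕ := t.2.2.1
def WangTile.north (t : WangTile) : ℕ := t.2.2.2

/-- The Wang matching conditions for a configuration of tiles on `ℤ × ℤ`. -/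
def WangMatch (f : ℤ × ℤ → WangTile) : Prop :=
  ∀ x y : ℤ,
    (f (x, y)).east = (f (x + 1, y)).west ∧ (f (x, y)).north = (f (x, y + 1)).south

/-- A tiling of the plane by the Wang tile set `S`. -/
def IsWangTiling (S : Finset WangTile) (f : ℤ × ℤ → WangTile) : Prop :=
  (∀ p, f p ∈ S) ∧ WangMatch f

/-- A configuration is periodic if it is invariant under some nonzero translation. -/
def WangPeriodic (f : ℤ × ℤ → WangTile) : Prop :=
  ∃ v : ℤ × ℤ, v ≠ 0 ∧ ∀ p, f (p + v) = f p

/-- A Wang tile set is aperiodic if it admits a tiling of the plane and every tiling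
of the plane by it is nonperiodic. -/
def WangAperiodic (S : Finset WangTile) : Prop :=
  (∃ f, IsWangTiling S f) ∧ ∀ f, IsWangTiling S f → ¬ WangPeriodic f

/-!
Kari's idea. Along a row, let the south edges carry the Beatty digits `⌊(i+1)ρ⌋ - ⌊iρ⌋ ∈ {1, 2}`
of some `ρ ∈ [1, 2)` and the north edges those of `σ`; a bounded carry passed from west to east
reconciles them exactly when `3σ = qρ`, where the multiplier `q ∈ {4, 2}` is fixed along the row
by the band of its carry colours. The map `ρ ↦ qρ/3` permutes `[1, 2)` (it is a rotation by
`log₂ (4/3)` in logarithmic coordinates), so its bi-infinite orbits stack rows into a tiling.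

Conversely, in any tiling let `T k` be the sum of the first `M` south digits of row `k`.
Telescoping the carries gives `3 T (k+1) = q_k T k + O(1)`, hence
`3^k T k = (q_0 ⋯ q_{k-1}) T 0 + O_k(1)` uniformly in `M`. A horizontal period `M` kills the error,
so every power of `3` divides `T 0 > 0`. A period `(a, b)` with `b > 0` makes row `b` a shift of
row `0`, so `T b = T 0 + O(|a|)`, and letting `M → ∞` forces `3^b = q_0 ⋯ q_{b-1}`, which is
impossible since the right side is even.
-/

open Finset

theorem three_mul_sum_add_eq_of_carry {s n w : ℕ → ℤ} {q : ℤ}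
    (h : ∀ i, 3 * n i + w (i + 1) = q * s i + w i) (M : ℕ) :
    3 * ∑ i ∈ range M, n i + w M = q * ∑ i ∈ range M, s i + w 0 := by
  induction M with
  | zero => simp
  | succ M ih =>
    simp only [sum_range_succ]
    linear_combination ih + h M

theorem abs_three_pow_mul_sub_prod_mul_le {T q d : ℕ → ℤ} {D : ℤ}
    (hT : ∀ k, 3 * T (k + 1) = q k * T k + d k) (hq : ∀ k, |q k| ≤ 4) (hd : ∀ k, |d k| ≤ D)
    (k : ℕ) : |3 ^ k * T k - (∏ j ∈ range k, q j) * T 0| ≤ D * (4 ^ k - 3 ^ k) := by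
  induction k with
  | zero => simp
  | succ k ih =>
    set E := 3 ^ k * T k - (∏ j ∈ range k, q j) * T 0
    have hrec : 3 ^ (k + 1) * T (k + 1) - (∏ j ∈ range (k + 1), q j) * T 0
        = q k * E + 3 ^ k * d k := by
      rw [prod_range_succ, pow_succ]
      linear_combination 3 ^ k * hT k
    calc _ = |q k * E + 3 ^ k * d k| := by rw [hrec]
      _ ≤ |q k| * |E| + 3 ^ k * |d k| := by
        grw [abs_add_le, abs_mul, abs_mul, abs_pow, abs_of_pos (three_pos : (0 : ℤ) < 3)]
      _ ≤ 4 * (D * (4 ^ k - 3 ^ k)) + 3 ^ k * D := by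
        gcongr
        · exact hq k
        · exact hd k
      _ = D * (4 ^ (k + 1) - 3 ^ (k + 1)) := by ring

theorem abs_sum_range_add_sub_sum_range_le {g : ℤ → ℤ} {L : ℤ} (hg : ∀ x y, |g x - g y| ≤ L)
    (M : ℕ) (d : ℤ) : |∑ i ∈ range M, g (i + d) - ∑ i ∈ range M, g i| ≤ |d| * L := by
  set F : ℤ → ℤ := fun d => ∑ i ∈ range M, g (i + d)
  have hstep (d : ℤ) : |F (d + 1) - F d| ≤ L := by
    have hsucc := sum_range_succ (fun i : ℕ => g (i + d)) M
    have hsucc' := sum_range_succ' (fun i : ℕ => g (i + d)) M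
    have hshift : ∑ i ∈ range M, g (((i + 1 : ℕ) : ℤ) + d) = F (d + 1) :=
      sum_congr rfl fun i _ => by push_cast; ring_nf
    have : F (d + 1) - F d = g (M + d) - g d := by
      simp only [Nat.cast_zero, zero_add, hshift] at hsucc'
      linarith
    rw [this]
    exact hg _ _
  suffices |F d - F 0| ≤ |d| * L by simpa [F] using this
  induction d using Int.induction_on with
  | zero => simp
  | succ i ih =>
    rw [Nat.abs_cast] at ih
    rw [abs_of_nonneg (by positivity : (0 : ℤ) ≤ i + 1)]
    linarith [abs_sub_le (F (i + 1)) (F i) (F 0), hstep i]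
  | pred i ih =>
    rw [abs_neg, Nat.abs_cast] at ih
    rw [show |-(i : ℤ) - 1| = i + 1 by rw [abs_of_nonpos (by omega)]; ring]
    have := hstep (-i - 1)
    rw [sub_add_cancel, abs_sub_comm] at this
    linarith [abs_sub_le (F (-i - 1)) (F (-i)) (F 0)]

namespace Kari

/-- Carry colours up to `6` mark the rows multiplying by `4/3`, the others those multiplying
by `2/3`. -/
def multiplier (w : ℕ) : ℤ := if w ≤ 6 then 4 else 2

theorem multiplier_eq_four_or_two (w : ℕ) : multiplier w = 4 ∨ multiplier w = 2 := by
  unfold multiplier; split_ifs <;> simp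

def IsTile (t : WangTile) : Prop :=
  1 ≤ t.south ∧ t.south ≤ 2 ∧ 1 ≤ t.north ∧ t.north ≤ 2 ∧ t.west ≤ 12 ∧ t.east ≤ 12 ∧
    (t.west ≤ 6 ↔ t.east ≤ 6) ∧
    3 * (t.north : ℤ) + t.east = multiplier t.west * t.south + t.west

instance : DecidablePred IsTile := fun _ => by unfold IsTile; infer_instance

def tiles : Finset WangTile :=
  (range 13 ×ˢ range 3 ×ˢ range 13 ×ˢ range 3).filter IsTile

theorem mem_tiles {t : WangTile} : t ∈ tiles ↔ IsTile t := by
  simp only [tiles, mem_filter, mem_product, mem_range, and_iff_right_iff_imp]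
  rintro ⟨-, hs, -, hn, hw, he, -⟩
  simp only [WangTile.west, WangTile.south, WangTile.east, WangTile.north] at *
  omega

section Tiling

variable {f : ℤ × ℤ → WangTile}

def rowMultiplier (f : ℤ × ℤ → WangTile) (y : ℤ) : ℤ := multiplier (f (0, y)).west

def rowSum (f : ℤ × ℤ → WangTile) (y : ℤ) (M : ℕ) : ℤ := ∑ i ∈ range M, ((f (i, y)).south : ℤ)

theorem isCoprime_three_pow_prod_rowMultiplier (f : ℤ × ℤ → WangTile) (k : ℕ) :
    IsCoprime ((3 : ℤ) ^ k) (∏ j ∈ range k, rowMultiplier f j) := by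
  refine IsCoprime.pow_left (IsCoprime.prod_right fun j _ => ?_)
  rcases multiplier_eq_four_or_two (f (0, j)).west with h | h <;>
    simp only [rowMultiplier, h, Int.isCoprime_iff_gcd_eq_one] <;> rfl

theorem three_pow_ne_prod_rowMultiplier (f : ℤ × ℤ → WangTile) {b : ℕ} (hb : 0 < b) :
    3 ^ b ≠ ∏ j ∈ range b, rowMultiplier f j := by
  have heven : 2 ∣ ∏ j ∈ range b, rowMultiplier f j := by
    refine dvd_trans ?_ (dvd_prod_of_mem _ (mem_range.2 hb))
    rcases multiplier_eq_four_or_two (f (0, 0)).west with h | h <;> simp [rowMultiplier, h]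
  exact fun h =>
    Int.not_even_iff_odd.2 (Odd.pow (Int.odd_iff.2 rfl)) (h ▸ even_iff_two_dvd.2 heven)

variable (hf : IsWangTiling tiles f)
include hf

theorem isTile_apply (p : ℤ × ℤ) : IsTile (f p) := mem_tiles.1 (hf.1 p)

theorem multiplier_west_eq_rowMultiplier (x y : ℤ) :
    multiplier (f (x, y)).west = rowMultiplier f y := by
  have hconst : Function.Periodic (fun x => multiplier (f (x, y)).west) 1 := fun x => by
    obtain ⟨-, -, -, -, -, -, hband, -⟩ := isTile_apply hf (x, y)
    simp only [← (hf.2 x y).1, multiplier, hband]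
  simpa [rowMultiplier] using hconst.int_mul_eq x

theorem le_rowSum (y : ℤ) (M : ℕ) : (M : ℤ) ≤ rowSum f y M := by
  simpa [rowSum] using card_nsmul_le_sum (range M) (fun i : ℕ => ((f (i, y)).south : ℤ)) 1
    fun i _ => by exact_mod_cast (isTile_apply hf (i, y)).1

theorem three_mul_rowSum_succ (k M : ℕ) :
    3 * rowSum f (k + 1 : ℕ) M
      = rowMultiplier f k * rowSum f k M + ((f (0, k)).west - (f (M, k)).west) := by
  have hcarry := three_mul_sum_add_eq_of_carry (q := rowMultiplier f k)
    (s := fun i => ((f (i, k)).south : ℤ)) (n := fun i => ((f (i, (k + 1 : ℕ))).south : ℤ))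
    (w := fun i => ((f (i, k)).west : ℤ)) (fun i => ?_) M
  · simp only [rowSum, Nat.cast_zero] at hcarry ⊢
    linarith
  obtain ⟨-, -, -, -, -, -, -, htile⟩ := isTile_apply hf (i, k)
  rw [multiplier_west_eq_rowMultiplier hf, (hf.2 i k).1, (hf.2 i k).2] at htile
  push_cast
  linarith

theorem abs_three_pow_mul_rowSum_sub_le {M : ℕ} {D : ℤ}
    (hD : ∀ k : ℕ, |((f (0, k)).west : ℤ) - (f (M, k)).west| ≤ D) (k : ℕ) :
    |3 ^ k * rowSum f k M - (∏ j ∈ range k, rowMultiplier f j) * rowSum f 0 M|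
      ≤ D * (4 ^ k - 3 ^ k) := by
  simpa using abs_three_pow_mul_sub_prod_mul_le (T := fun k : ℕ => rowSum f k M)
    (three_mul_rowSum_succ hf · M)
    (fun j => by rcases multiplier_eq_four_or_two (f (0, j)).west with h | h <;>
      simp [rowMultiplier, h]) hD k

theorem false_of_horizontal_period {a : ℤ} (ha : 0 < a) (hper : ∀ p, f (p + (a, 0)) = f p) :
    False := by
  lift a to ℕ using ha.le
  have hexact (k : ℕ) :
      3 ^ k * rowSum f k a = (∏ j ∈ range k, rowMultiplier f j) * rowSum f 0 a := by
    have hwest (k : ℕ) : |((f (0, k)).west : ℤ) - (f (a, k)).west| ≤ 0 := by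
      have h := congrArg WangTile.west (hper (0, k))
      simp only [Prod.mk_add_mk, zero_add, add_zero] at h
      simp [h]
    simpa [sub_eq_zero] using abs_three_pow_mul_rowSum_sub_le hf hwest k
  have hpos : rowSum f 0 a ≠ 0 := by have := le_rowSum hf 0 a; omega
  obtain ⟨k, hk⟩ := (Int.finiteMultiplicity_iff (a := 3)).2 ⟨by decide, hpos⟩
  exact hk ((isCoprime_three_pow_prod_rowMultiplier f (k + 1)).dvd_of_dvd_mul_left (Dvd.intro _ (hexact (k + 1))))

theorem abs_rowSum_sub_le_of_period {a b : ℤ} (hper : ∀ p, f (p + (a, b)) = f p) (M : ℕ) :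
    |rowSum f b M - rowSum f 0 M| ≤ |a| := by
  have hrow : rowSum f b M = ∑ i ∈ range M, ((f (i + -a, 0)).south : ℤ) :=
    sum_congr rfl fun i _ => by rw [← hper (i + -a, 0)]; simp
  rw [hrow, rowSum, ← abs_neg a, ← mul_one |-a|]
  refine abs_sum_range_add_sub_sum_range_le (g := fun x => ((f (x, 0)).south : ℤ))
    (fun x y => ?_) M (-a)
  obtain ⟨hx₁, hx₂, -⟩ := isTile_apply hf (x, 0)
  obtain ⟨hy₁, hy₂, -⟩ := isTile_apply hf (y, 0)
  rw [abs_le]; omega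

theorem false_of_period {a b : ℤ} (hb : 0 < b) (hper : ∀ p, f (p + (a, b)) = f p) : False := by
  have hshift := abs_rowSum_sub_le_of_period hf hper
  lift b to ℕ using hb.le
  set Q := ∏ j ∈ range b, rowMultiplier f j
  have hrows (M : ℕ) :
      |3 ^ b * rowSum f b M - Q * rowSum f 0 M| ≤ 12 * (4 ^ b - 3 ^ b) := by
    refine abs_three_pow_mul_rowSum_sub_le hf (fun k => ?_) b
    have h0 := (isTile_apply hf (0, k)).2.2.2.2.1
    have hM := (isTile_apply hf (M, k)).2.2.2.2.1
    rw [abs_le]; omega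
  have hQ : 1 ≤ |3 ^ b - Q| :=
    Int.one_le_abs (sub_ne_zero.2 (three_pow_ne_prod_rowMultiplier f (Nat.cast_pos.1 hb)))
  obtain ⟨C, hC⟩ : ∃ C : ℤ, ∀ M : ℕ, (M : ℤ) ≤ C := by
    refine ⟨12 * (4 ^ b - 3 ^ b) + 3 ^ b * |a|, fun M => ?_⟩
    have hT := le_rowSum hf 0 M
    calc (M : ℤ) ≤ rowSum f 0 M := hT
      _ ≤ |3 ^ b - Q| * rowSum f 0 M := le_mul_of_one_le_left (by omega) hQ
      _ = |(3 ^ b - Q) * rowSum f 0 M| := by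
        rw [abs_mul, abs_of_nonneg (by omega : 0 ≤ rowSum f 0 M)]
      _ = |(3 ^ b * rowSum f b M - Q * rowSum f 0 M)
            - 3 ^ b * (rowSum f b M - rowSum f 0 M)| := by ring_nf
      _ ≤ 12 * (4 ^ b - 3 ^ b) + 3 ^ b * |a| := by
        grw [abs_sub, abs_mul, hrows, hshift, abs_pow, abs_of_pos (three_pos : (0 : ℤ) < 3)]
  have := hC (C.toNat + 1)
  omega

theorem not_wangPeriodic : ¬ WangPeriodic f := by
  rintro ⟨⟨a, b⟩, hv, hper⟩
  have hper' (p : ℤ × ℤ) : f (p + (-a, -b)) = f p := by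
    have h := hper (p + (-a, -b))
    rw [show p + (-a, -b) + (a, b) = p by ext <;> simp] at h
    exact h.symm
  rcases lt_trichotomy b 0 with hb | rfl | hb
  · exact false_of_period hf (neg_pos.2 hb) hper'
  · rcases lt_trichotomy a 0 with ha | rfl | ha
    · exact false_of_horizontal_period hf (neg_pos.2 ha) (by simpa using hper')
    · exact hv rfl
    · exact false_of_horizontal_period hf ha hper
  · exact false_of_period hf hb hper

end Tiling

noncomputable section Construction

def digit (ρ : ℝ) (x : ℤ) : ℤ := ⌊(x + 1) * ρ⌋ - ⌊x * ρ⌋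

def carry (q : ℤ) (ρ σ : ℝ) (x : ℤ) : ℤ := q * ⌊x * ρ⌋ - 3 * ⌊x * σ⌋

theorem digit_mem_Icc {ρ : ℝ} (hρ : ρ ∈ Set.Ico 1 2) (x : ℤ) : digit ρ x ∈ Set.Icc 1 2 := by
  have h₁ := Int.floor_le (x * ρ)
  have h₂ := Int.floor_le ((x + 1) * ρ)
  have h₃ := Int.lt_floor_add_one (x * ρ)
  have h₄ := Int.lt_floor_add_one ((x + 1) * ρ)
  have hpos : (0 : ℝ) < digit ρ x := by push_cast [digit]; linarith [hρ.1]
  have hlt : (digit ρ x : ℝ) < 3 := by push_cast [digit]; linarith [hρ.2]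
  constructor
  · exact_mod_cast hpos
  · have : digit ρ x < 3 := by exact_mod_cast hlt
    omega

theorem carry_mem_Ioo {q : ℤ} (hq : 0 < q) {ρ σ : ℝ} (h : 3 * σ = q * ρ) (x : ℤ) :
    carry q ρ σ x ∈ Set.Ioo (-q) 3 := by
  have h₁ := Int.floor_le (x * ρ)
  have h₂ := Int.floor_le (x * σ)
  have h₃ := Int.lt_floor_add_one (x * ρ)
  have h₄ := Int.lt_floor_add_one (x * σ)
  have hq' : (0 : ℝ) < q := by exact_mod_cast hq
  have hxσ : 3 * (x * σ) = q * (x * ρ) := by linear_combination x * h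
  constructor
  · have : (-q : ℝ) < carry q ρ σ x := by push_cast [carry]; nlinarith
    exact_mod_cast this
  · have : (carry q ρ σ x : ℝ) < 3 := by push_cast [carry]; nlinarith
    exact_mod_cast this

theorem three_mul_digit_add_carry (q : ℤ) (ρ σ : ℝ) (x : ℤ) :
    3 * digit σ x + carry q ρ σ (x + 1) = q * digit ρ x + carry q ρ σ x := by
  simp only [digit, carry]
  push_cast
  ring

/-- By `carry_mem_Ioo`, this puts the carries of a `q = 4` row into `[0, 5]` and those of a
`q = 2` row into `[9, 12]`, on either side of the threshold of `multiplier`. -/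
def carryColour (q c : ℤ) : ℕ := (c + if q = 4 then 3 else 10).toNat

def rowTile (q : ℤ) (ρ σ : ℝ) (x : ℤ) : WangTile :=
  (carryColour q (carry q ρ σ x), (digit ρ x).toNat, carryColour q (carry q ρ σ (x + 1)),
    (digit σ x).toNat)

theorem rowTile_mem_tiles {q : ℤ} (hq : q = 4 ∨ q = 2) {ρ σ : ℝ} (hρ : ρ ∈ Set.Ico 1 2)
    (hσ : σ ∈ Set.Ico 1 2) (h : 3 * σ = q * ρ) (x : ℤ) : rowTile q ρ σ x ∈ tiles := by
  have hq₀ : 0 < q := by omega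
  obtain ⟨hs₁, hs₂⟩ := digit_mem_Icc hρ x
  obtain ⟨hn₁, hn₂⟩ := digit_mem_Icc hσ x
  obtain ⟨hw₁, hw₂⟩ := carry_mem_Ioo hq₀ h x
  obtain ⟨he₁, he₂⟩ := carry_mem_Ioo hq₀ h (x + 1)
  have htile := three_mul_digit_add_carry q ρ σ x
  rw [mem_tiles]
  simp only [IsTile, rowTile, carryColour, multiplier, WangTile.west, WangTile.south,
    WangTile.east, WangTile.north]
  rcases hq with rfl | rfl <;> split_ifs <;> omega

def angle : ℝ := Real.logb 2 (4 / 3)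

theorem angle_pos : 0 < angle := Real.logb_pos (by norm_num) (by norm_num)

theorem angle_lt_one : angle < 1 := by
  rw [angle, Real.logb_lt_iff_lt_rpow (by norm_num) (by norm_num)]
  norm_num

theorem two_rpow_angle : (2 : ℝ) ^ angle = 4 / 3 :=
  Real.rpow_logb two_pos (by norm_num) (by norm_num)

def orbit (y : ℤ) : ℝ := 2 ^ Int.fract (y * angle)

def orbitMultiplier (y : ℤ) : ℤ := if Int.fract (y * angle) + angle < 1 then 4 else 2

theorem orbit_mem_Ico (y : ℤ) : orbit y ∈ Set.Ico 1 2 := by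
  constructor
  · exact Real.one_le_rpow (by norm_num) (Int.fract_nonneg _)
  · simpa [orbit] using
      Real.rpow_lt_rpow_of_exponent_lt (by norm_num : (1 : ℝ) < 2) (Int.fract_lt_one _)

theorem orbitMultiplier_eq_four_or_two (y : ℤ) : orbitMultiplier y = 4 ∨ orbitMultiplier y = 2 := by
  unfold orbitMultiplier; split_ifs <;> simp

theorem three_mul_orbit_add_one (y : ℤ) : 3 * orbit (y + 1) = orbitMultiplier y * orbit y := by
  set u := Int.fract (y * angle)
  have hu₀ : 0 ≤ u := Int.fract_nonneg _
  have hu₁ : u < 1 := Int.fract_lt_one _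
  have hfloor : (y + 1 : ℤ) * angle - (u + angle) = ⌊y * angle⌋ := by
    push_cast; linarith [Int.self_sub_fract (y * angle)]
  have hrot : (2 : ℝ) ^ (u + angle) = 4 / 3 * orbit y := by
    rw [orbit, Real.rpow_add two_pos, two_rpow_angle, mul_comm]
  unfold orbitMultiplier orbit
  split_ifs with h
  · rw [Int.fract_eq_iff.2 ⟨by linarith [angle_pos], h, _, hfloor⟩, hrot, orbit]
    push_cast; ring
  · have hfract : Int.fract ((y + 1 : ℤ) * angle) = u + angle - 1 :=
      Int.fract_eq_iff.2 ⟨by linarith, by linarith [angle_lt_one], ⌊y * angle⌋ + 1,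
        by push_cast at hfloor ⊢; linarith⟩
    rw [hfract, Real.rpow_sub_one two_ne_zero, hrot, orbit]
    push_cast; ring

def tiling (p : ℤ × ℤ) : WangTile :=
  rowTile (orbitMultiplier p.2) (orbit p.2) (orbit (p.2 + 1)) p.1

theorem isWangTiling_tiling : IsWangTiling tiles tiling :=
  ⟨fun _ => rowTile_mem_tiles (orbitMultiplier_eq_four_or_two _) (orbit_mem_Ico _)
    (orbit_mem_Ico _) (three_mul_orbit_add_one _) _, fun _ _ => ⟨rfl, rfl⟩⟩

end Construction

end Kari

/-- **Berger.** There exists an aperiodic Wang tile set: a finite set of Wang tiles that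
admits a tiling of the plane, all of whose tilings of the plane are nonperiodic. -/
theorem exists_aperiodic_wang_tile_set : ∃ S : Finset WangTile, WangAperiodic S :=
  ⟨Kari.tiles, ⟨Kari.tiling, Kari.isWangTiling_tiling⟩, fun _ hf => Kari.not_wangPeriodic hf⟩
end

section
/- Wang's theorem: if every Wang tile set that admits a tiling of the plane also admits a periodic tiling (Wang's Fundamental Conjecture), then the predicate 'S admits a tiling of the plane', on Wang tile sets encoded as finite lists of quadruples of natural numbers, is a computable (decidable) predicate. -/
/-- A tiling of the plane by the Wang tile set encoded by the list `l`. -/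
def IsWangTilingL (l : List WangTile) (f : ℤ × ℤ → WangTile) : Prop :=
  (∀ p, f p ∈ l) ∧ WangMatch f

/-! A tile set tiles the plane iff it tiles every finite square (compactness), so non-tileability is
semi-decidable: search for a square that cannot be tiled. Under the conjecture, tileability is
equivalent to the existence of a periodic tiling. A tiling with one period yields one with two
independent periods (pigeonhole on the columns of a strip of one period's height), and doubly
periodic tilings are tilings of finite tori, which can be searched for as well. A predicate that
is semi-decidable together with its complement is computable. -/

theorem Function.Periodic.apply_emod {β : Type*} {φ : ℤ → β} {c : ℤ} (h : Function.Periodic φ c)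
    (x : ℤ) : φ (x % c) = φ x := by
  rw [Int.emod_def, mul_comm, ← smul_eq_mul, h.sub_zsmul_eq]

/- Pigeonhole gives two equal blocks `c (k * (2 * w + 1) + ·)`; `c'` repeats the stretch of `c`
from the first of them to the second. -/
theorem exists_periodic_locally_agreeing {α : Type*} {s : Set α} (hs : s.Finite) {c : ℤ → α}
    (hc : ∀ x, c x ∈ s) (w : ℕ) :
    ∃ (c' : ℤ → α) (p : ℕ), 0 < p ∧ Function.Periodic c' p ∧
      ∀ x, ∃ y, ∀ d : ℤ, |d| ≤ w → c' (x + d) = c (y + d) := by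
  set m := 2 * w + 1
  obtain ⟨k₁, k₂, hk, hwin⟩ := (Set.Finite.pi fun _ : Fin m => hs).exists_lt_map_eq_of_forall_mem
    (f := fun k : ℕ => fun i : Fin m => c (k * m + i)) fun k => by simp [hc]
  set p := (k₂ - k₁) * m with hp
  have hpm : (p : ℤ) = k₂ * m - k₁ * m := by rw [hp]; push_cast [Nat.cast_sub hk.le]; ring
  have hmp : m ≤ p := Nat.le_mul_of_pos_left m (Nat.sub_pos_of_lt hk)
  set b₀ : ℤ := k₁ * m
  set c' : ℤ → α := fun x => c (b₀ + (x - b₀) % p)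
  have hper : Function.Periodic c' p := fun x => by
    simp only [c', add_sub_right_comm, Int.add_emod_right]
  have hagree : ∀ z, b₀ ≤ z → z < b₀ + p + m → c' z = c z := by
    intro z hz₁ hz₂
    rcases lt_or_ge z (b₀ + p) with hz | hz
    · simp only [c']
      rw [Int.emod_eq_of_lt (by omega) (by omega)]
      ring_nf
    · have hwrap := congrFun hwin ⟨(z - b₀ - p).toNat, by omega⟩
      rw [← hper.sub_eq]
      simp only [c'] at hwrap ⊢
      rw [Int.emod_eq_of_lt (by omega) (by omega)]
      convert hwrap using 2 <;> omega
  refine ⟨c', p, by omega, hper, fun x => ?_⟩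
  obtain ⟨y, q, rfl, hy₀, hy₁⟩ : ∃ y q : ℤ, x = y + q * p ∧ b₀ + w ≤ y ∧ y < b₀ + w + p :=
    ⟨b₀ + w + (x - b₀ - w) % p, (x - b₀ - w) / p, by rw [Int.emod_def]; ring,
      by linarith [Int.emod_nonneg (x - b₀ - w) (b := p) (by omega)],
      by linarith [Int.emod_lt_of_pos (x - b₀ - w) (b := (p : ℤ)) (by omega)]⟩
  refine ⟨y, fun d hd => ?_⟩
  rw [abs_le] at hd
  rw [add_right_comm, ← smul_eq_mul, hper.zsmul, hagree _ (by omega) (by omega)]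

theorem PrimrecRel.forall_lt_bound {β : Type*} [Primcodable β] {R : ℕ → β → Prop} {f : β → ℕ}
    (hR : PrimrecRel R) (hf : Primrec f) : PrimrecPred fun b => ∀ i < f b, R i b :=
  (hR.forall_mem_list.comp (Primrec.list_range.comp hf) .id).of_eq fun b => by simp

theorem PrimrecRel.exists_lt_bound {β : Type*} [Primcodable β] {R : ℕ → β → Prop} {f : β → ℕ}
    (hR : PrimrecRel R) (hf : Primrec f) : PrimrecPred fun b => ∃ i < f b, R i b :=
  (hR.exists_mem_list.comp (Primrec.list_range.comp hf) .id).of_eq fun b => by simp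

theorem rePred_exists_of_primrecRel {α : Type*} [Primcodable α] {p : α → ℕ → Prop}
    (hp : PrimrecRel p) : REPred fun a => ∃ n, p a n := by
  classical
  refine (Partrec.rfind (p := fun a n => (decide (p a n) : Part Bool)) hp.decide.to_comp)
    |>.dom_re.of_eq fun a => Nat.rfind_dom.trans ?_
  simp

def WangMatchAt (f : ℤ × ℤ → WangTile) (x y : ℤ) : Prop :=
  (f (x, y)).east = (f (x + 1, y)).west ∧ (f (x, y)).north = (f (x, y + 1)).south

def HasSquarePeriod (g : ℤ × ℤ → WangTile) (n : ℕ) : Prop :=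
  Function.Periodic g (n, 0) ∧ Function.Periodic g (0, n)

def WangTile.transpose (t : WangTile) : WangTile := (t.south, t.west, t.north, t.east)

theorem IsWangTilingL.transpose {l : List WangTile} {f : ℤ × ℤ → WangTile}
    (hf : IsWangTilingL l f) :
    IsWangTilingL (l.map WangTile.transpose) fun p => (f p.swap).transpose :=
  ⟨fun p => List.mem_map_of_mem (hf.1 p.swap), fun x y => ⟨(hf.2 y x).2, (hf.2 y x).1⟩⟩

theorem WangTile.transpose_involutive : Function.Involutive WangTile.transpose := fun _ => rfl

theorem HasSquarePeriod.transpose {g : ℤ × ℤ → WangTile} {n : ℕ} (hg : HasSquarePeriod g n) :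
    HasSquarePeriod (fun p => (g p.swap).transpose) n :=
  ⟨fun p => by simpa using congrArg WangTile.transpose (hg.2 p.swap),
    fun p => by simpa using congrArg WangTile.transpose (hg.1 p.swap)⟩

section StackStrip

variable {b : ℕ} [NeZero b]

theorem Int.exists_eq_mul_add_fin (y : ℤ) : ∃ (q : ℤ) (r : Fin b), y = q * b + r := by
  have hb : (0 : ℤ) < b := by exact_mod_cast NeZero.pos b
  have h₀ := Int.emod_nonneg y hb.ne'
  have h₁ := Int.emod_lt_of_pos y hb
  refine ⟨y / b, ⟨(y % b).toNat, by omega⟩, ?_⟩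
  rw [Fin.val_mk, Int.toNat_of_nonneg h₀, Int.emod_def]
  ring

def stackStrip (a : ℤ) (c : ℤ → Fin b → WangTile) : ℤ × ℤ → WangTile := fun p =>
  c (p.1 - p.2 / b * a) ⟨(p.2 % b).toNat, by
    have := NeZero.pos b
    have := Int.emod_lt_of_pos p.2 (b := b) (by omega)
    omega⟩

theorem stackStrip_mul_add (a : ℤ) (c : ℤ → Fin b → WangTile) (x q : ℤ) (r : Fin b) :
    stackStrip a c (x, q * b + r) = c (x - q * a) r := by
  have hb := NeZero.pos b
  have h₁ : (q * b + r) / (b : ℤ) = q := by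
    rw [add_comm, Int.add_mul_ediv_right _ _ (by omega),
      Int.ediv_eq_zero_of_lt (by omega) (by omega), zero_add]
  have h₂ : (q * b + r) % (b : ℤ) = r := by
    rw [add_comm, Int.add_mul_emod_self_right, Int.emod_eq_of_lt (by omega) (by omega)]
  simp only [stackStrip, h₁, h₂, Int.toNat_natCast]

theorem hasSquarePeriod_stackStrip {a : ℤ} {c : ℤ → Fin b → WangTile} {p : ℕ}
    (hc : Function.Periodic c p) : HasSquarePeriod (stackStrip a c) (p * b) := by
  constructor <;> rintro ⟨x, y⟩ <;> obtain ⟨q, r, rfl⟩ := Int.exists_eq_mul_add_fin (b := b) y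
  · rw [Prod.mk_add_mk, add_zero, stackStrip_mul_add, stackStrip_mul_add,
      show x + ((p * b : ℕ) : ℤ) - q * a = x - q * a + (b : ℤ) * p by push_cast; ring,
      hc.nat_mul]
  · rw [Prod.mk_add_mk, add_zero,
      show q * b + (r : ℤ) + ((p * b : ℕ) : ℤ) = (q + p) * b + r by push_cast; ring,
      stackStrip_mul_add, stackStrip_mul_add,
      show x - (q + p) * a = x - q * a + (-a) • (p : ℤ) by rw [smul_eq_mul]; ring, hc.zsmul]

end StackStrip

/- The columns of `f` over the strip `0 ≤ y < b` form a sequence over a finite alphabet. A periodic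
sequence that looks like it within distance `|a| + 1` of every point still satisfies every
matching condition when its copies are stacked with shift `a`: the seam between two copies is a
seam of `f`, because `f (x, b) = f (x - a, 0)`. -/
theorem IsWangTilingL.exists_hasSquarePeriod_of_periodic_of_pos {l : List WangTile}
    {f : ℤ × ℤ → WangTile} (hf : IsWangTilingL l f) {a : ℤ} {b : ℕ} (hb : 0 < b)
    (hper : Function.Periodic f (a, b)) :
    ∃ g n, 0 < n ∧ IsWangTilingL l g ∧ HasSquarePeriod g n := by
  have : NeZero b := ⟨hb.ne'⟩
  obtain ⟨c, p, hp, hcp, hloc⟩ := exists_periodic_locally_agreeing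
    (Set.Finite.pi fun _ : Fin b => l.finite_toSet) (c := fun x j => f (x, j))
    (fun x => by simp [hf.1]) (a.natAbs + 1)
  have hcol : ∀ z, ∃ u, (∀ r : Fin b, c z r = f (u, r)) ∧
      (∀ r : Fin b, c (z + 1) r = f (u + 1, r)) ∧ ∀ r : Fin b, c (z - a) r = f (u - a, r) := by
    intro z
    obtain ⟨u, hu⟩ := hloc z
    refine ⟨u, fun r => ?_, fun r => ?_, fun r => ?_⟩
    · simpa using congrFun (hu 0 (abs_le.2 ⟨by omega, by omega⟩)) r
    · simpa using congrFun (hu 1 (abs_le.2 ⟨by omega, by omega⟩)) r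
    · simpa [sub_eq_add_neg] using congrFun (hu (-a) (abs_le.2 ⟨by omega, by omega⟩)) r
  refine ⟨stackStrip a c, p * b, by positivity, ⟨fun ⟨x, y⟩ => ?_, fun x y => ?_⟩,
    hasSquarePeriod_stackStrip hcp⟩
  · obtain ⟨q, r, rfl⟩ := Int.exists_eq_mul_add_fin (b := b) y
    obtain ⟨u, hu, -⟩ := hcol (x - q * a)
    rw [stackStrip_mul_add, hu]
    exact hf.1 _
  obtain ⟨q, r, rfl⟩ := Int.exists_eq_mul_add_fin (b := b) y
  obtain ⟨u, hu, hu₁, hua⟩ := hcol (x - q * a)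
  refine ⟨?_, ?_⟩
  · rw [stackStrip_mul_add, stackStrip_mul_add, show x + 1 - q * a = x - q * a + 1 by ring, hu,
      hu₁]
    exact (hf.2 u r).1
  rcases Nat.lt_or_ge (r + 1) b with hr | hr
  · rw [stackStrip_mul_add, show q * b + (r : ℤ) + 1 = q * b + ((⟨r + 1, hr⟩ : Fin b) : ℕ) by
      push_cast; ring, stackStrip_mul_add, hu, hu]
    exact_mod_cast (hf.2 u r).2
  · have hrb : (r : ℤ) + 1 = b := by omega
    rw [stackStrip_mul_add, show q * b + (r : ℤ) + 1 = (q + 1) * b + ((⟨0, hb⟩ : Fin b) : ℕ) by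
      push_cast; linear_combination hrb, stackStrip_mul_add,
      show x - (q + 1) * a = x - q * a - a by ring, hu, hua, Fin.val_mk, Nat.cast_zero,
      ← hper (u - a, 0), Prod.mk_add_mk, sub_add_cancel, zero_add, ← hrb]
    exact (hf.2 u r).2

theorem IsWangTilingL.exists_hasSquarePeriod_of_periodic_of_ne_zero {l : List WangTile}
    {f : ℤ × ℤ → WangTile} (hf : IsWangTilingL l f) {a b : ℤ} (hb : b ≠ 0)
    (hper : Function.Periodic f (a, b)) :
    ∃ g n, 0 < n ∧ IsWangTilingL l g ∧ HasSquarePeriod g n := by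
  rcases hb.lt_or_gt with hb | hb
  · refine hf.exists_hasSquarePeriod_of_periodic_of_pos (a := -a) (b := (-b).toNat) (by omega) ?_
    simpa [Int.toNat_of_nonneg (by omega : 0 ≤ -b)] using hper.neg
  · refine hf.exists_hasSquarePeriod_of_periodic_of_pos (a := a) (b := b.toNat) (by omega) ?_
    simpa [Int.toNat_of_nonneg hb.le] using hper

theorem IsWangTilingL.exists_hasSquarePeriod {l : List WangTile} {f : ℤ × ℤ → WangTile}
    (hf : IsWangTilingL l f) (hper : WangPeriodic f) :
    ∃ g n, 0 < n ∧ IsWangTilingL l g ∧ HasSquarePeriod g n := by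
  obtain ⟨⟨a, b⟩, hv, hper⟩ := hper
  by_cases hb : b = 0
  · subst hb
    obtain ⟨g, n, hn, hg, hgn⟩ := hf.transpose.exists_hasSquarePeriod_of_periodic_of_ne_zero
      (a := 0) (b := a) (by rintro rfl; exact hv rfl)
      fun p => by simpa using congrArg WangTile.transpose (hper p.swap)
    refine ⟨_, n, hn, ?_, hgn.transpose⟩
    simpa [List.map_map, WangTile.transpose_involutive.comp_self, WangTile.transpose_involutive _]
      using hg.transpose
  · exact hf.exists_hasSquarePeriod_of_periodic_of_ne_zero hb hper

/- Every `m < l.length ^ (n * n)` codes an `n × n` pattern over `l` by its base-`l.length` digits;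
the junk tile `default` only occurs for `l = []`. -/
def decodePattern (l : List WangTile) (n m i j : ℕ) : WangTile :=
  l.getD (m / l.length ^ (j + n * i) % l.length) default

theorem decodePattern_mem {l : List WangTile} (hl : l ≠ []) (n m i j : ℕ) :
    decodePattern l n m i j ∈ l := by
  rw [decodePattern, List.getD_eq_getElem _ _ (Nat.mod_lt _ (List.length_pos_iff.2 hl))]
  exact List.getElem_mem _

theorem exists_decodePattern_eq {l : List WangTile} {n : ℕ} {P : ℕ → ℕ → WangTile}
    (hP : ∀ i j, P i j ∈ l) :
    ∃ m < l.length ^ (n * n), ∀ i < n, ∀ j < n, decodePattern l n m i j = P i j := by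
  let digits : Fin (n * n) → Fin l.length := fun k =>
    ⟨l.idxOf (P (finProdFinEquiv.symm k).1 (finProdFinEquiv.symm k).2),
      List.idxOf_lt_length_iff.2 (hP _ _)⟩
  refine ⟨finFunctionFinEquiv digits, (finFunctionFinEquiv digits).isLt, fun i hi j hj => ?_⟩
  have h := finFunctionFinEquiv_symm_apply_val (finFunctionFinEquiv digits)
    (finProdFinEquiv (⟨i, hi⟩, ⟨j, hj⟩))
  rw [Equiv.symm_apply_apply, finProdFinEquiv_apply_val] at h
  simp only [decodePattern, ← h, digits, Equiv.symm_apply_apply]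
  rw [List.getD_eq_getElem _ _ (List.idxOf_lt_length_iff.2 (hP i j)), List.getElem_idxOf]

/- With `r = n` these are the matching conditions of the `n × n` torus, with `r = n - 1` those of
the `n × n` square. -/
def GridMatches (P : ℕ → ℕ → WangTile) (n r : ℕ) : Prop :=
  ∀ i < n, ∀ j < r, (P j i).east = (P ((j + 1) % n) i).west ∧
    (P i j).north = (P i ((j + 1) % n)).south

def GridTileable (l : List WangTile) (n r : ℕ) : Prop :=
  ∃ m < l.length ^ (n * n), GridMatches (decodePattern l n m) n r

theorem gridMatches_congr {P Q : ℕ → ℕ → WangTile} {n r : ℕ} (hr : r ≤ n)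
    (h : ∀ i < n, ∀ j < n, P i j = Q i j) : GridMatches P n r ↔ GridMatches Q n r := by
  have hn : ∀ j < r, (j + 1) % n < n := fun j hj => Nat.mod_lt _ (by omega)
  refine forall₂_congr fun i hi => forall₂_congr fun j hj => ?_
  rw [h j (by omega) i hi, h _ (hn j hj) i hi, h i hi j (by omega), h i hi _ (hn j hj)]

theorem gridTileable_iff {l : List WangTile} {n r : ℕ} (hn : 0 < n) (hr : r ≤ n) :
    GridTileable l n r ↔ ∃ P : ℕ → ℕ → WangTile, (∀ i j, P i j ∈ l) ∧ GridMatches P n r := by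
  constructor
  · rintro ⟨m, hm, hP⟩
    have hl : l ≠ [] := by
      rintro rfl
      simp [zero_pow (Nat.mul_pos hn hn).ne'] at hm
    exact ⟨_, decodePattern_mem hl n m, hP⟩
  · rintro ⟨P, hP, hPn⟩
    obtain ⟨m, hm, hmP⟩ := exists_decodePattern_eq (n := n) hP
    exact ⟨m, hm, (gridMatches_congr hr hmP).2 hPn⟩

theorem exists_tiling_hasSquarePeriod_of_gridMatches {l : List WangTile} {P : ℕ → ℕ → WangTile}
    {n : ℕ} (hn : 0 < n) (hP : ∀ i j, P i j ∈ l) (hPn : GridMatches P n n) :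
    ∃ f, IsWangTilingL l f ∧ HasSquarePeriod f n := by
  have : NeZero n := ⟨hn.ne'⟩
  have hsucc : ∀ x : ℤ, ((x + 1 : ℤ) : ZMod n).val = ((x : ZMod n).val + 1) % n := fun x => by
    rw [Int.cast_add, Int.cast_one, ZMod.val_add, ZMod.val_one_eq_one_mod, Nat.add_mod_mod]
  refine ⟨fun p => P (p.1 : ZMod n).val (p.2 : ZMod n).val, ⟨fun p => hP _ _, fun x y => ?_⟩,
    fun p => ?_, fun p => ?_⟩
  · have h := hPn _ (ZMod.val_lt (y : ZMod n)) _ (ZMod.val_lt (x : ZMod n))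
    have h' := hPn _ (ZMod.val_lt (x : ZMod n)) _ (ZMod.val_lt (y : ZMod n))
    simp only [hsucc]
    exact ⟨h.1, h'.2⟩
  · simp
  · simp

theorem HasSquarePeriod.gridMatches {l : List WangTile} {g : ℤ × ℤ → WangTile} {n : ℕ}
    (hg : IsWangTilingL l g) (hgn : HasSquarePeriod g n) :
    GridMatches (fun i j => g (i, j)) n n := by
  intro i _ j _
  have hx : Function.Periodic (fun x => g (x, i)) n := fun x => by simpa using hgn.1 (x, i)
  have hy : Function.Periodic (fun y => g (i, y)) n := fun y => by simpa using hgn.2 (i, y)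
  have hx' : g (((j : ℤ) + 1) % n, i) = g (j + 1, i) := hx.apply_emod _
  have hy' : g (i, ((j : ℤ) + 1) % n) = g (i, j + 1) := hy.apply_emod _
  simp only [Int.natCast_mod, Nat.cast_succ, hx', hy']
  exact ⟨(hg.2 j i).1, (hg.2 i j).2⟩

theorem IsWangTilingL.gridMatches_square {l : List WangTile} {f : ℤ × ℤ → WangTile}
    (hf : IsWangTilingL l f) (n : ℕ) : GridMatches (fun i j => f (i, j)) (n + 1) n := by
  intro i _ j hj
  rw [Nat.mod_eq_of_lt (by omega : j + 1 < n + 1)]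
  exact ⟨by exact_mod_cast (hf.2 j i).1, by exact_mod_cast (hf.2 i j).2⟩

/- König's lemma, as compactness of the space of configurations with tiles in `l` (Tychonoff). -/
theorem exists_tiling_of_forall_box {l : List WangTile}
    (h : ∀ N : ℕ, ∃ f : ℤ × ℤ → WangTile, (∀ p, f p ∈ l) ∧
      ∀ x y : ℤ, x.natAbs ≤ N → y.natAbs ≤ N → WangMatchAt f x y) :
    ∃ f, IsWangTilingL l f := by
  let K : ℕ → Set (ℤ × ℤ → WangTile) := fun N => {f | ∀ p : ℤ × ℤ,
    f p ∈ l ∧ (p.1.natAbs ≤ N → p.2.natAbs ≤ N → WangMatchAt f p.1 p.2)}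
  have hclosed : ∀ N, IsClosed (K N) := fun N => by
    simp only [K, Set.ofPred_forall]
    exact isClosed_iInter fun p => (isClosed_discrete {t : WangTile × WangTile × WangTile |
      t.1 ∈ l ∧ (p.1.natAbs ≤ N → p.2.natAbs ≤ N →
        t.1.east = t.2.1.west ∧ t.1.north = t.2.2.south)}).preimage
      (show Continuous fun f : ℤ × ℤ → WangTile => (f p, f (p.1 + 1, p.2), f (p.1, p.2 + 1))
        by fun_prop)
  have hcompact : IsCompact (K 0) :=
    (isCompact_univ_pi fun _ => l.finite_toSet.isCompact).of_isClosed_subset (hclosed 0)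
      fun f hf p _ => (hf p).1
  have hanti : ∀ N, K (N + 1) ⊆ K N := fun N f hf p =>
    ⟨(hf p).1, fun hx hy => (hf p).2 (by omega) (by omega)⟩
  have hne : ∀ N, (K N).Nonempty := fun N =>
    let ⟨f, hfl, hf⟩ := h N
    ⟨f, fun p => ⟨hfl p, hf p.1 p.2⟩⟩
  obtain ⟨f, hf⟩ :=
    IsCompact.nonempty_iInter_of_sequence_nonempty_isCompact_isClosed K hanti hne hcompact hclosed
  rw [Set.mem_iInter] at hf
  exact ⟨f, fun p => (hf 0 p).1,
    fun x y => (hf (max x.natAbs y.natAbs) (x, y)).2 (le_max_left ..) (le_max_right ..)⟩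

theorem exists_tiling_of_forall_gridMatches {l : List WangTile}
    (h : ∀ n, ∃ P : ℕ → ℕ → WangTile, (∀ i j, P i j ∈ l) ∧ GridMatches P (n + 1) n) :
    ∃ f, IsWangTilingL l f := by
  refine exists_tiling_of_forall_box fun N => ?_
  obtain ⟨P, hP, hPN⟩ := h (2 * N + 1)
  refine ⟨fun p => P (p.1 + N).toNat (p.2 + N).toNat, fun p => hP _ _, fun x y hx hy => ?_⟩
  have hsucc : ∀ z : ℤ, z.natAbs ≤ N →
      (z + 1 + N).toNat = ((z + N).toNat + 1) % (2 * N + 1 + 1) :=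
    fun z hz => by rw [Nat.mod_eq_of_lt (by omega)]; omega
  simp only [WangMatchAt, hsucc x hx, hsucc y hy]
  exact ⟨(hPN _ (by omega) _ (by omega)).1, (hPN _ (by omega) _ (by omega)).2⟩

theorem exists_gridTileable_torus_iff {l : List WangTile} :
    (∃ n, GridTileable l (n + 1) (n + 1)) ↔ ∃ f, IsWangTilingL l f ∧ WangPeriodic f := by
  constructor
  · rintro ⟨n, hn⟩
    obtain ⟨P, hP, hPn⟩ := (gridTileable_iff n.succ_pos le_rfl).1 hn
    obtain ⟨f, hf, hfn⟩ := exists_tiling_hasSquarePeriod_of_gridMatches n.succ_pos hP hPn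
    exact ⟨f, hf, ((n + 1 : ℕ), 0), by simp; omega, hfn.1⟩
  · rintro ⟨f, hf, hper⟩
    obtain ⟨g, n, hn, hg, hgn⟩ := hf.exists_hasSquarePeriod hper
    refine ⟨n - 1, ?_⟩
    rw [Nat.sub_add_cancel hn, gridTileable_iff hn le_rfl]
    exact ⟨_, fun i j => hg.1 _, hgn.gridMatches hg⟩

theorem exists_not_gridTileable_square_iff {l : List WangTile} :
    (∃ n, ¬ GridTileable l (n + 1) n) ↔ ¬ ∃ f, IsWangTilingL l f := by
  constructor
  · rintro ⟨n, hn⟩ ⟨f, hf⟩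
    exact hn <| (gridTileable_iff n.succ_pos n.le_succ).2
      ⟨_, fun i j => hf.1 _, hf.gridMatches_square n⟩
  · intro h
    by_contra! hsq
    exact h (exists_tiling_of_forall_gridMatches fun n =>
      (gridTileable_iff n.succ_pos n.le_succ).1 (hsq n))

section Computability

open Primrec

theorem WangTile.primrec_east : Primrec WangTile.east := fst.comp (snd.comp snd)

theorem WangTile.primrec_west : Primrec WangTile.west := fst

theorem WangTile.primrec_north : Primrec WangTile.north := snd.comp (snd.comp snd)

theorem WangTile.primrec_south : Primrec WangTile.south := fst.comp snd

theorem primrec_decodePattern {δ : Type*} [Primcodable δ] {L : δ → List WangTile}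
    {n m i j : δ → ℕ} (hL : Primrec L) (hn : Primrec n) (hm : Primrec m) (hi : Primrec i)
    (hj : Primrec j) : Primrec fun z => decodePattern (L z) (n z) (m z) (i z) (j z) :=
  have hlen := list_length.comp hL
  (list_getD default).comp hL <| nat_mod.comp (nat_div.comp hm <|
    (Primrec₂.unpaired'.1 Nat.Primrec.pow).comp hlen (nat_add.comp hj (nat_mul.comp hn hi))) hlen

theorem primrecPred_gridTileable :
    PrimrecPred fun x : List WangTile × ℕ × ℕ => GridTileable x.1 x.2.1 x.2.2 := by
  -- The innermost check reads its arguments from `(j, i, m, l, n, r)`.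
  have hL : Primrec fun z : ℕ × ℕ × ℕ × List WangTile × ℕ × ℕ => z.2.2.2.1 :=
    fst.comp (snd.comp (snd.comp snd))
  have hn : Primrec fun z : ℕ × ℕ × ℕ × List WangTile × ℕ × ℕ => z.2.2.2.2.1 :=
    fst.comp (snd.comp (snd.comp (snd.comp snd)))
  have hm : Primrec fun z : ℕ × ℕ × ℕ × List WangTile × ℕ × ℕ => z.2.2.1 :=
    fst.comp (snd.comp snd)
  have hsucc : Primrec fun z : ℕ × ℕ × ℕ × List WangTile × ℕ × ℕ => (z.1 + 1) % z.2.2.2.2.1 :=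
    nat_mod.comp (succ.comp fst) hn
  have hcell : PrimrecRel fun (j : ℕ) (z : ℕ × ℕ × List WangTile × ℕ × ℕ) =>
      (decodePattern z.2.2.1 z.2.2.2.1 z.2.1 j z.1).east =
          (decodePattern z.2.2.1 z.2.2.2.1 z.2.1 ((j + 1) % z.2.2.2.1) z.1).west ∧
        (decodePattern z.2.2.1 z.2.2.2.1 z.2.1 z.1 j).north =
          (decodePattern z.2.2.1 z.2.2.2.1 z.2.1 z.1 ((j + 1) % z.2.2.2.1)).south :=
    .and
      (Primrec.eq.comp
        (WangTile.primrec_east.comp (primrec_decodePattern hL hn hm fst (fst.comp snd)))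
        (WangTile.primrec_west.comp (primrec_decodePattern hL hn hm hsucc (fst.comp snd))))
      (Primrec.eq.comp
        (WangTile.primrec_north.comp (primrec_decodePattern hL hn hm (fst.comp snd) fst))
        (WangTile.primrec_south.comp (primrec_decodePattern hL hn hm (fst.comp snd) hsucc)))
  have hrow : PrimrecRel fun (i : ℕ) (y : ℕ × List WangTile × ℕ × ℕ) => ∀ j < y.2.2.2,
      (decodePattern y.2.1 y.2.2.1 y.1 j i).east =
          (decodePattern y.2.1 y.2.2.1 y.1 ((j + 1) % y.2.2.1) i).west ∧
        (decodePattern y.2.1 y.2.2.1 y.1 i j).north =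
          (decodePattern y.2.1 y.2.2.1 y.1 i ((j + 1) % y.2.2.1)).south :=
    hcell.forall_lt_bound (snd.comp (snd.comp (snd.comp snd)))
  have hgrid : PrimrecRel fun (m : ℕ) (x : List WangTile × ℕ × ℕ) =>
      GridMatches (decodePattern x.1 x.2.1 m) x.2.1 x.2.2 :=
    hrow.forall_lt_bound (fst.comp (snd.comp snd))
  exact hgrid.exists_lt_bound ((Primrec₂.unpaired'.1 Nat.Primrec.pow).comp
    (list_length.comp fst) (nat_mul.comp (fst.comp snd) (fst.comp snd)))

end Computability

/-- **Wang's theorem.** If every Wang tile set admitting a tiling of the plane also admits a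
periodic tiling (Wang's Fundamental Conjecture), then the predicate "admits a tiling of the
plane" on (list-encoded) Wang tile sets is computable. -/
theorem wang_fundamental_conjecture_implies_decidable
    (hFC : ∀ l : List WangTile, (∃ f, IsWangTilingL l f) →
      ∃ f, IsWangTilingL l f ∧ WangPeriodic f) :
    ComputablePred (fun l : List WangTile => ∃ f, IsWangTilingL l f) := by
  have hsucc : Primrec fun x : List WangTile × ℕ => x.2 + 1 := Primrec.succ.comp Primrec.snd
  have hTorus : REPred fun l : List WangTile => ∃ n, GridTileable l (n + 1) (n + 1) :=
    rePred_exists_of_primrecRel <|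
      primrecPred_gridTileable.comp (Primrec.fst.pair (hsucc.pair hsucc))
  have hNoSquare : REPred fun l : List WangTile => ∃ n, ¬ GridTileable l (n + 1) n :=
    rePred_exists_of_primrecRel <|
      (primrecPred_gridTileable.comp (Primrec.fst.pair (hsucc.pair Primrec.snd))).not
  refine ComputablePred.computable_iff_re_compl_re'.2
    ⟨hTorus.of_eq fun l => ?_, hNoSquare.of_eq fun l => exists_not_gridTileable_square_iff⟩
  rw [exists_gridTileable_torus_iff]
  exact ⟨fun ⟨f, hf, _⟩ => ⟨f, hf⟩, hFC l⟩
end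

section
/- If a Wang tile set S admits a periodic tiling of the plane (a tiling invariant under some nonzero translation v ∈ ℤ × ℤ), then S admits a doubly periodic tiling: there exist a tiling f by S and an integer N ≥ 1 such that f(p + (N,0)) = f(p) and f(p + (0,N)) = f(p) for all p ∈ ℤ × ℤ. -/
/-- Main construction: from a tiling periodic under `(a, b)` with `b ≥ 1`, build a
doubly periodic tiling. -/
private lemma wang_main (S : Finset WangTile) (f : ℤ × ℤ → WangTile) (a b : ℤ)
    (hmem : ∀ p, f p ∈ S) (hmatch : WangMatch f)
    (hper : ∀ p : ℤ × ℤ, f (p + (a, b)) = f p) (hb : 1 ≤ b) :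
    ∃ (g : ℤ × ℤ → WangTile) (N : ℤ), 1 ≤ N ∧ IsWangTiling S g ∧
      ∀ p : ℤ × ℤ, g (p + (N, 0)) = g p ∧ g (p + (0, N)) = g p := by
  have hb0 : (0:ℤ) < b := by omega
  set W : ℤ := (a.natAbs : ℤ) + 1 with hW
  set w : ℕ := a.natAbs + 2 with hw
  -- pigeonhole: two identical windows of width `w` (and height `b`)
  have hpig : ∃ k1 k2 : ℕ, k1 < k2 ∧
      ∀ j : ℕ, j < w → ∀ r : ℕ, r < b.toNat →
        f (((k1 * w + j : ℕ) : ℤ), (r : ℤ)) = f (((k2 * w + j : ℕ) : ℤ), (r : ℤ)) := by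
    obtain ⟨k1, k2, hne, heq⟩ := Finite.exists_ne_map_eq_of_infinite
      (fun k : ℕ => (fun (j : Fin w) (r : Fin b.toNat) =>
        (⟨f (((k * w + (j : ℕ) : ℕ) : ℤ), (((r : ℕ) : ℕ) : ℤ)), hmem _⟩ : {t // t ∈ S})))
    rcases hne.lt_or_gt with h | h
    · exact ⟨k1, k2, h, fun j hj r hr =>
        congrArg Subtype.val (congrFun (congrFun heq ⟨j, hj⟩) ⟨r, hr⟩)⟩
    · exact ⟨k2, k1, h, fun j hj r hr =>
        congrArg Subtype.val (congrFun (congrFun heq.symm ⟨j, hj⟩) ⟨r, hr⟩)⟩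
  obtain ⟨k1, k2, hk, hequ⟩ := hpig
  set x1 : ℤ := ((k1 * w : ℕ) : ℤ) with hx1
  set x2 : ℤ := ((k2 * w : ℕ) : ℤ) with hx2
  set m : ℤ := x2 - x1 with hmdef
  have hwm : x1 + (w : ℤ) ≤ x2 := by
    have h1 : k1 * w + w ≤ k2 * w := by
      calc k1 * w + w = (k1 + 1) * w := by ring
        _ ≤ k2 * w := Nat.mul_le_mul_right _ hk
    rw [hx1, hx2]; exact_mod_cast h1
  have hWw : W + 1 = (w : ℤ) := by rw [hW, hw]; push_cast; ring
  have hm : W + 1 ≤ m := by omega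
  have hm0 : 0 < m := by omega
  -- the window equality, in integer form
  have hwin : ∀ j : ℤ, 0 ≤ j → j ≤ W → ∀ r : ℤ, 0 ≤ r → r < b →
      f (x1 + j, r) = f (x2 + j, r) := by
    intro j hj0 hjW r hr0 hrb
    have hj' : j.toNat < w := by omega
    have hr' : r.toNat < b.toNat := by omega
    have h := hequ j.toNat hj' r.toNat hr'
    have e1 : ((k1 * w + j.toNat : ℕ) : ℤ) = x1 + j := by
      rw [hx1]; push_cast [Int.toNat_of_nonneg hj0]; ring
    have e2 : ((k2 * w + j.toNat : ℕ) : ℤ) = x2 + j := by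
      rw [hx2]; push_cast [Int.toNat_of_nonneg hj0]; ring
    have er : ((r.toNat : ℕ) : ℤ) = r := Int.toNat_of_nonneg hr0
    rw [e1, e2, er] at h
    exact h
  -- the folding map
  set phi : ℤ → ℤ := fun t => x1 + (t - x1) % m with hphi
  have hphim : ∀ t k : ℤ, phi (t + k * m) = phi t := by
    intro t k
    simp only [hphi]
    congr 1
    rw [show t + k * m - x1 = (t - x1) + k * m by ring, Int.add_mul_emod_self_right]
  -- every window of the folded configuration is a window of the original
  have claim : ∀ u : ℤ, ∃ t : ℤ, ∀ j : ℤ, 0 ≤ j → j ≤ W → ∀ r : ℤ, 0 ≤ r → r < b →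
      f (phi (u + j), r) = f (t + j, r) := by
    intro u
    refine ⟨x1 + (u - x1) % m, ?_⟩
    intro j hj0 hjW r hr0 hrb
    set r0 : ℤ := (u - x1) % m with hr0def
    have h1 : 0 ≤ r0 := Int.emod_nonneg _ (by omega)
    have h2 : r0 < m := Int.emod_lt_of_pos _ hm0
    have hkey : phi (u + j) = x1 + (r0 + j) % m := by
      simp only [hphi]
      congr 1
      have hde := Int.mul_ediv_add_emod (u - x1) m
      rw [show u + j - x1 = (r0 + j) + ((u - x1) / m) * m by rw [hr0def]; linarith,
        Int.add_mul_emod_self_right]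
    by_cases hc : r0 + j < m
    · rw [hkey, Int.emod_eq_of_lt (by omega) hc, ← add_assoc]
    · have hs0 : (r0 + j) % m = r0 + j - m := by
        have h4 : (r0 + j) % m = ((r0 + j - m) + 1 * m) % m := by ring_nf
        rw [h4, Int.add_mul_emod_self_right]
        exact Int.emod_eq_of_lt (by omega) (by omega)
      rw [hkey, hs0, hwin (r0 + j - m) (by omega) (by omega) r hr0 hrb,
        show x2 + (r0 + j - m) = x1 + r0 + j by omega]
  -- the cross-strip vertical matching of the original tiling
  have hcross : ∀ t : ℤ, (f (t, b - 1)).north = (f (t - a, 0)).south := by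
    intro t
    have h1 := (hmatch t (b - 1)).2
    have h2 : f (t, b - 1 + 1) = f (t - a, 0) := by
      have h3 := hper (t - a, 0)
      rw [show ((t - a, 0) + (a, b) : ℤ × ℤ) = (t, b - 1 + 1) by
        rw [Prod.mk_add_mk, Prod.mk.injEq]; omega] at h3
      exact h3
    rw [h2] at h1
    exact h1
  -- division facts
  have hdm : ∀ y : ℤ, 0 ≤ y % b ∧ y % b < b :=
    fun y => ⟨Int.emod_nonneg _ (by omega), Int.emod_lt_of_pos _ hb0⟩
  have huniq : ∀ y q r : ℤ, y = b * q + r → 0 ≤ r → r < b → y / b = q ∧ y % b = r :=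
    fun y q r h h0 h1 => (Int.ediv_emod_unique hb0).mpr ⟨by omega, h0, h1⟩
  -- the doubly periodic tiling
  refine ⟨fun p : ℤ × ℤ => f (phi (p.1 - p.2 / b * a), p.2 % b), m * b,
    by nlinarith, ⟨fun p => hmem _, ?_⟩, ?_⟩
  · -- matching
    intro x y
    simp only
    constructor
    · -- horizontal
      obtain ⟨t, ht⟩ := claim (x - y / b * a)
      have e1 := ht 0 le_rfl (by omega) (y % b) (hdm y).1 (hdm y).2
      have e2 := ht 1 (by omega) (by omega) (y % b) (hdm y).1 (hdm y).2
      simp only [add_zero] at e1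
      rw [show x + 1 - y / b * a = x - y / b * a + 1 by ring, e1, e2]
      exact (hmatch t (y % b)).1
    · -- vertical
      by_cases hrc : y % b + 1 < b
      · have hq := huniq (y + 1) (y / b) (y % b + 1)
          (by have := Int.mul_ediv_add_emod y b; linarith) (by have := (hdm y).1; omega) hrc
        rw [hq.1, hq.2]
        exact (hmatch (phi (x - y / b * a)) (y % b)).2
      · have hy : y % b = b - 1 := by have := (hdm y).2; omega
        have hq := huniq (y + 1) (y / b + 1) 0
          (by rw [mul_add, mul_one]; have := Int.mul_ediv_add_emod y b; linarith)
          le_rfl hb0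
        rw [hq.1, hq.2, hy]
        rcases le_or_gt a 0 with ha | ha
        · obtain ⟨t, ht⟩ := claim (x - y / b * a)
          have e1 := ht 0 le_rfl (by omega) (b - 1) (by omega) (by omega)
          have e2 := ht (-a) (by omega) (by omega) 0 le_rfl hb0
          simp only [add_zero] at e1
          have hc2 := hcross t
          rw [show t - a = t + -a by ring] at hc2
          rw [show x - (y / b + 1) * a = x - y / b * a + -a by ring, e1, e2]
          exact hc2
        · obtain ⟨t, ht⟩ := claim (x - y / b * a - a)
          have e1 := ht a (le_of_lt ha) (by omega) (b - 1) (by omega) (by omega)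
          have e2 := ht 0 le_rfl (by omega) 0 le_rfl hb0
          simp only [add_zero] at e2
          have hc2 := hcross (t + a)
          rw [show t + a - a = t by ring] at hc2
          rw [show x - (y / b + 1) * a = x - y / b * a - a by ring, e2,
            show x - y / b * a = x - y / b * a - a + a by ring, e1]
          exact hc2
  · -- periods
    rintro ⟨x, y⟩
    constructor
    · simp only [Prod.mk_add_mk, add_zero]
      rw [show x + m * b - y / b * a = (x - y / b * a) + b * m by ring, hphim]
    · simp only [Prod.mk_add_mk, add_zero]
      have hq := huniq (y + m * b) (y / b + m) (y % b)
        (by rw [mul_add]; have := Int.mul_ediv_add_emod y b; linarith)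
        (hdm y).1 (hdm y).2
      rw [hq.1, hq.2,
        show x - (y / b + m) * a = (x - y / b * a) + (-a) * m by ring, hphim]

/-- If a Wang tile set admits a periodic tiling, then it admits a doubly periodic tiling:
one invariant under both `(N, 0)` and `(0, N)` for some integer `N ≥ 1`. -/
theorem wang_periodic_implies_doubly_periodic (S : Finset WangTile)
    (h : ∃ f, IsWangTiling S f ∧ WangPeriodic f) :
    ∃ (g : ℤ × ℤ → WangTile) (N : ℤ), 1 ≤ N ∧ IsWangTiling S g ∧
      ∀ p : ℤ × ℤ, g (p + (N, 0)) = g p ∧ g (p + (0, N)) = g p := by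
  obtain ⟨f, ⟨hmem, hmatch⟩, ⟨a, b⟩, hv, hper⟩ := h
  have hper' : ∀ p : ℤ × ℤ, f (p + (-a, -b)) = f p := by
    intro p
    have h1 := hper (p + (-a, -b))
    rw [show (p + (-a, -b) + (a, b) : ℤ × ℤ) = p by
      obtain ⟨px, py⟩ := p; rw [Prod.mk_add_mk, Prod.mk_add_mk, Prod.mk.injEq]
      omega] at h1
    exact h1.symm
  rcases lt_trichotomy b 0 with hb | hb | hb
  · exact wang_main S f (-a) (-b) hmem hmatch hper' (by omega)
  · -- b = 0, so a ≠ 0 : transpose the tiling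
    subst hb
    have ha : a ≠ 0 := by
      intro h0
      exact hv (by rw [h0]; rfl)
    -- reduce to a positive horizontal period
    obtain ⟨a, ha, hper⟩ : ∃ a' : ℤ, 0 < a' ∧ ∀ p : ℤ × ℤ, f (p + (a', 0)) = f p := by
      rcases ha.lt_or_gt with h | h
      · exact ⟨-a, by omega, by simpa using hper'⟩
      · exact ⟨a, h, hper⟩
    -- the transposed tiling
    set τ : WangTile → WangTile := fun t => (t.2.1, t.1, t.2.2.2, t.2.2.1) with hτ
    have hττ : ∀ t : WangTile, τ (τ t) = t := fun t => rfl
    have hmem' : ∀ p : ℤ × ℤ, τ (f (p.2, p.1)) ∈ S.image τ :=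
      fun p => Finset.mem_image_of_mem _ (hmem _)
    have hmatch' : WangMatch (fun p : ℤ × ℤ => τ (f (p.2, p.1))) := by
      intro x y
      exact ⟨(hmatch y x).2, (hmatch y x).1⟩
    have hper'' : ∀ p : ℤ × ℤ, (fun p : ℤ × ℤ => τ (f (p.2, p.1))) (p + (0, a)) =
        (fun p : ℤ × ℤ => τ (f (p.2, p.1))) p := by
      rintro ⟨px, py⟩
      simp only [Prod.mk_add_mk, add_zero]
      rw [show ((py + a, px) : ℤ × ℤ) = (py, px) + (a, 0) by
        rw [Prod.mk_add_mk, Prod.mk.injEq]; omega]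
      rw [hper (py, px)]
    obtain ⟨g', N, hN, ⟨hg'mem, hg'match⟩, hg'per⟩ :=
      wang_main (S.image τ) (fun p : ℤ × ℤ => τ (f (p.2, p.1))) 0 a hmem' hmatch' hper''
        (by omega)
    refine ⟨fun p : ℤ × ℤ => τ (g' (p.2, p.1)), N, hN, ⟨?_, ?_⟩, ?_⟩
    · intro p
      obtain ⟨s, hs, hst⟩ := Finset.mem_image.mp (hg'mem (p.2, p.1))
      have : τ (g' (p.2, p.1)) = s := by rw [← hst, hττ]
      simpa [this] using hs
    · intro x y
      exact ⟨(hg'match y x).2, (hg'match y x).1⟩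
    · rintro ⟨x, y⟩
      constructor
      · simp only [Prod.mk_add_mk, add_zero]
        have h1 := (hg'per (y, x)).2
        simp only [Prod.mk_add_mk, add_zero] at h1
        rw [h1]
      · simp only [Prod.mk_add_mk, add_zero]
        have h1 := (hg'per (y, x)).1
        simp only [Prod.mk_add_mk, add_zero] at h1
        rw [h1]
  · exact wang_main S f a b hmem hmatch hper hb
end

section
/- There exists an aperiodic Wang tile set consisting of exactly 13 tiles (Kari–Culik). -/
/-!
Kari's tiles multiply real numbers: a row of tiles carries on its south edges the digits
`⌊(i+1)α⌋ - ⌊iα⌋` of the Beatty sequence of `α`, on its north edges those of `2α` or `α/3`, and on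
its vertical edges the carries. Along a bi-infinite orbit of `α ↦ 2α` on `(1/3, 1]`,
`α ↦ α/3` on `(1, 2]` these rows stack to a tiling of the plane.

Conversely, if a tiling has a horizontal period `n`, the digit sums `σ k` of row `k` over one
period satisfy `σ (k+1) = 2 σ k` or `3 σ (k+1) = σ k`. They are bounded, and positive because
Culik's second copy `3` of the digit `0` rules out rows of zeros, so two of them coincide and
`2^a = 3^b` with `a + b > 0`. Any periodic tiling yields one with a horizontal period: if the
period is `(a, b)` with `b > 0`, repeat a suitable block of columns of the strip `ℤ × [0, b)`
and stack copies of the strip shifted by `a`.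
-/

lemma toIcoMod_add_one_cases {P : ℤ} (hP : 0 < P) (c t : ℤ) :
    (toIcoMod hP c (t + 1) = toIcoMod hP c t + 1 ∧ toIcoDiv hP c (t + 1) = toIcoDiv hP c t) ∨
      (toIcoMod hP c t + 1 = c + P ∧ toIcoMod hP c (t + 1) = c ∧
        toIcoDiv hP c (t + 1) = toIcoDiv hP c t + 1) := by
  have hmem := sub_toIcoDiv_zsmul_mem_Ico hP c t
  simp only [smul_eq_mul, Set.mem_Ico] at hmem
  simp only [toIcoMod, smul_eq_mul]
  by_cases hlt : t - toIcoDiv hP c t * P + 1 < c + P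
  · have hdiv : toIcoDiv hP c (t + 1) = toIcoDiv hP c t := by
      rw [toIcoDiv_eq_iff, smul_eq_mul, Set.mem_Ico]; constructor <;> linarith
    left; rw [hdiv]; constructor <;> ring
  · have hdiv : toIcoDiv hP c (t + 1) = toIcoDiv hP c t + 1 := by
      rw [toIcoDiv_eq_iff, smul_eq_mul, Set.mem_Ico, add_one_mul]; constructor <;> linarith
    right; rw [hdiv, add_one_mul]; exact ⟨by linarith, by linarith, rfl⟩

lemma sum_range_eq_of_telescope {u v w : ℕ → ℤ} {n : ℕ} (h : ∀ j, u j + w (j + 1) = v j + w j)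
    (hw : w n = w 0) : ∑ j ∈ Finset.range n, u j = ∑ j ∈ Finset.range n, v j := by
  have h' : ∀ j ∈ Finset.range n, u j = v j - (w (j + 1) - w j) := fun j _ => by linarith [h j]
  rw [Finset.sum_congr rfl h', Finset.sum_sub_distrib, Finset.sum_range_sub, hw, sub_self,
    sub_zero]

lemma two_pow_ne_three_pow {α β : ℕ} (h : α + β ≠ 0) : (2 : ℤ) ^ α ≠ 3 ^ β := by
  intro he
  rcases Nat.eq_zero_or_pos α with rfl | hα
  · have h3 : (3 : ℕ) ^ β = 1 := by exact_mod_cast he.symm.trans (pow_zero 2)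
    rw [Nat.pow_eq_one] at h3
    omega
  · have h3 : Even ((3 : ℤ) ^ β) := he ▸ Int.even_pow.2 ⟨even_two, hα.ne'⟩
    exact absurd (Int.even_pow.1 h3).1 (by decide)

section DoubleOrThird

variable {u : ℕ → ℤ} (hu : ∀ k, u (k + 1) = 2 * u k ∨ 3 * u (k + 1) = u k)
include hu

lemma exists_pow_mul_eq_pow_mul (m j : ℕ) :
    ∃ α β : ℕ, α + β = j ∧ 3 ^ β * u (m + j) = 2 ^ α * u m := by
  induction j with
  | zero => exact ⟨0, 0, rfl, by simp⟩
  | succ j ih =>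
    obtain ⟨α, β, hαβ, he⟩ := ih
    rcases hu (m + j) with h | h
    · exact ⟨α + 1, β, by omega, by rw [← add_assoc, h]; linear_combination 2 * he⟩
    · exact ⟨α, β + 1, by omega, by rw [← add_assoc, pow_succ]; linear_combination he + 3 ^ β * h⟩

lemma ne_of_lt_of_double_or_third (hne : ∀ k, u k ≠ 0) {m₁ m₂ : ℕ} (h : m₁ < m₂) :
    u m₁ ≠ u m₂ := by
  intro heq
  obtain ⟨α, β, hαβ, he⟩ := exists_pow_mul_eq_pow_mul hu m₁ (m₂ - m₁)
  rw [Nat.add_sub_cancel' h.le, ← heq] at he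
  exact two_pow_ne_three_pow (by omega) (mul_right_cancel₀ (hne m₁) he).symm

end DoubleOrThird

noncomputable def beatty (α : ℝ) (i : ℤ) : ℤ := ⌊(i : ℝ) * α⌋

lemma beatty_succ_sub_mem_Icc {α : ℝ} {m m' : ℤ} (hm : m ≤ α) (hm' : α ≤ m') (i : ℤ) :
    m ≤ beatty α (i + 1) - beatty α i ∧ beatty α (i + 1) - beatty α i ≤ m' := by
  have e : ((i + 1 : ℤ) : ℝ) * α = i * α + α := by push_cast; ring
  simp only [beatty, e]
  have hup : ⌊(i : ℝ) * α + α⌋ ≤ ⌊(i : ℝ) * α + ⌈α⌉⌋ :=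
    Int.floor_mono (by linarith [Int.le_ceil α])
  rw [Int.floor_add_intCast] at hup
  have hfl : m ≤ ⌊α⌋ := Int.le_floor.2 hm
  have hce : ⌈α⌉ ≤ m' := Int.ceil_le.2 hm'
  constructor <;> linarith [Int.le_floor_add ((i : ℝ) * α) α]

lemma beatty_natCast_mul_div (α : ℝ) {n : ℕ} (hn : n ≠ 0) (i : ℤ) :
    beatty (n * α) i / n = beatty α i := by
  rw [beatty, beatty, mul_left_comm]
  exact Int.natCast_mul_floor_div_cancel hn _

lemma beatty_two_mul_of_beatty_succ_eq {α : ℝ} (hα : 2 / 3 < α) {i : ℤ}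
    (hd : beatty α (i + 1) = beatty α i) :
    beatty (2 * α) i = 2 * beatty α i ∧ beatty (2 * α) (i + 1) = 2 * beatty α i + 1 := by
  have e : ((i + 1 : ℤ) : ℝ) * α = i * α + α := by push_cast; ring
  simp only [beatty, e] at hd ⊢
  have hlo := Int.floor_le ((i : ℝ) * α)
  have hhi := Int.lt_floor_add_one ((i : ℝ) * α + α)
  rw [hd] at hhi
  constructor <;> rw [Int.floor_eq_iff] <;> push_cast <;> constructor <;> nlinarith

section Periodicity

variable {S : Finset WangTile} {f : ℤ × ℤ → WangTile}

lemma exists_period_of_wangPeriodic (h : WangPeriodic f) :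
    ∃ a b : ℤ, (0 < b ∨ b = 0 ∧ 0 < a) ∧ ∀ p, f (p + (a, b)) = f p := by
  obtain ⟨⟨a, b⟩, hv, hp⟩ := h
  have hneg : ∀ p, f (p + (-a, -b)) = f p := fun p => by
    simpa [add_assoc, Prod.mk_zero_zero] using (hp (p + (-a, -b))).symm
  have ha : b = 0 → a ≠ 0 := by rintro rfl rfl; exact hv rfl
  rcases lt_trichotomy b 0 with hb | rfl | hb
  · exact ⟨-a, -b, Or.inl (by omega), hneg⟩
  · rcases (ha rfl).lt_or_gt with ha | ha
    · exact ⟨-a, 0, Or.inr ⟨rfl, by omega⟩, by simpa using hneg⟩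
    · exact ⟨a, 0, Or.inr ⟨rfl, ha⟩, hp⟩
  · exact ⟨a, b, Or.inl hb, hp⟩

/-- Repeat the columns `[c, c + P)` of the strip `ℤ × [0, b)` of `f` and stack copies of the
resulting strip, each shifted by `a`. -/
noncomputable def foldTiling (f : ℤ × ℤ → WangTile) (a c : ℤ) {b P : ℤ} (hb : 0 < b)
    (hP : 0 < P) : ℤ × ℤ → WangTile :=
  fun p => f (toIcoMod hP c (p.1 - toIcoDiv hb 0 p.2 * a), toIcoMod hb 0 p.2)

lemma foldTiling_add_horizontal (a c : ℤ) {b P : ℤ} (hb : 0 < b) (hP : 0 < P) (p : ℤ × ℤ) :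
    foldTiling f a c hb hP (p + (P, 0)) = foldTiling f a c hb hP p := by
  simp only [foldTiling, Prod.fst_add, Prod.snd_add, add_zero]
  rw [show p.1 + P - toIcoDiv hb 0 p.2 * a = p.1 - toIcoDiv hb 0 p.2 * a + P by ring,
    toIcoMod_add_right]

lemma isWangTiling_foldTiling (hf : IsWangTiling S f) {a b c P : ℤ} (hb : 0 < b) (hP : 0 < P)
    (hper : ∀ p, f (p + (a, b)) = f p)
    (hcol : ∀ w r, c - |a| ≤ w → w ≤ c + P + |a| → 0 ≤ r → r < b →
      f (w, r) = f (toIcoMod hP c w, r)) :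
    IsWangTiling S (foldTiling f a c hb hP) := by
  refine ⟨fun p => hf.1 _, fun x y => ⟨?_, ?_⟩⟩ <;> simp only [foldTiling]
  · set t := x - toIcoDiv hb 0 y * a
    have hr := toIcoMod_mem_Ico hb 0 y
    rw [show x + 1 - toIcoDiv hb 0 y * a = t + 1 by ring]
    rcases toIcoMod_add_one_cases hP c t with ⟨hstep, -⟩ | ⟨hwrap, hstep, -⟩
    · rw [hstep]; exact (hf.2 _ _).1
    · have hc := hcol (c + P) (toIcoMod hb 0 y) (by linarith [abs_nonneg a])
        (by linarith [abs_nonneg a]) hr.1 (by simpa using hr.2)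
      rw [toIcoMod_add_right, toIcoMod_apply_left] at hc
      rw [hstep, ← hc, ← hwrap]; exact (hf.2 _ _).1
  · set t := x - toIcoDiv hb 0 y * a
    rcases toIcoMod_add_one_cases hb 0 y with ⟨hstep, hdiv⟩ | ⟨hwrap, hstep, hdiv⟩
    · rw [hstep, hdiv]; exact (hf.2 _ _).2
    · set u := toIcoMod hP c t
      have hu := toIcoMod_mem_Ico hP c t
      have hc := hcol (u - a) 0 (by linarith [le_abs_self a, hu.1])
        (by linarith [neg_abs_le a, hu.2]) le_rfl hb
      have hfold : toIcoMod hP c (x - toIcoDiv hb 0 (y + 1) * a) = toIcoMod hP c (u - a) := by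
        rw [hdiv, show x - (toIcoDiv hb 0 y + 1) * a = u - a + toIcoDiv hP c t • P by
          simp only [u, toIcoMod, smul_eq_mul]; ring, toIcoMod_add_zsmul]
      rw [hstep, hfold, ← hc, (hf.2 _ _).2, hwrap, zero_add, ← hper (u - a, 0)]
      simp

lemma exists_periodic_columns (hf : IsWangTiling S f) {b : ℤ} (hb : 0 < b) (M : ℕ) :
    ∃ c P : ℤ, ∃ hP : 0 < P, ∀ w r, c - M ≤ w → w ≤ c + P + M → 0 ≤ r → r < b →
      f (w, r) = f (toIcoMod hP c w, r) := by
  -- windows at multiples of `M + 1`, so that the period `P` found below exceeds `M`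
  let window : ℕ → Fin (2 * M + 1) → Fin b.toNat → S :=
    fun m i r => ⟨f (m * (M + 1) + i, r), hf.1 _⟩
  obtain ⟨m₁, m₂, hm, heq⟩ :=
    Set.finite_univ.exists_lt_map_eq_of_forall_mem (f := window) fun _ => Set.mem_univ _
  set n : ℤ := m₁ * (M + 1)
  set P : ℤ := m₂ * (M + 1) - n
  have hPM : M + 1 ≤ P := by
    have : (m₁ : ℤ) + 1 ≤ m₂ := by exact_mod_cast hm
    simp only [P, n]; nlinarith
  have hP : 0 < P := by omega
  have hwin : ∀ i r : ℤ, 0 ≤ i → i ≤ 2 * M → 0 ≤ r → r < b →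
      f (n + i, r) = f (n + P + i, r) := by
    intro i r hi0 hi hr0 hr
    have h := congrArg Subtype.val
      (congrFun (congrFun heq ⟨i.toNat, by omega⟩) ⟨r.toNat, by omega⟩)
    simp only [window, Int.toNat_of_nonneg hi0, Int.toNat_of_nonneg hr0] at h
    rwa [show n + P = m₂ * (M + 1) by ring]
  refine ⟨n + M, P, hP, fun w r hw₁ hw₂ hr0 hr => ?_⟩
  rcases lt_or_ge w (n + M) with hlo | hlo
  · rw [(toIcoMod_eq_iff hP (c := w + P)).2 ⟨⟨by omega, by omega⟩, -1, by simp⟩]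
    convert hwin (w - n) r (by omega) (by omega) hr0 hr using 3 <;> ring
  rcases lt_or_ge w (n + M + P) with hmid | hhi
  · rw [(toIcoMod_eq_self hP).2 ⟨hlo, hmid⟩]
  · rw [(toIcoMod_eq_iff hP (c := w - P)).2 ⟨⟨by omega, by omega⟩, 1, by simp⟩]
    convert (hwin (w - n - P) r (by omega) (by omega) hr0 hr).symm using 3 <;> ring

theorem exists_horizontally_periodic_of_wangPeriodic (hf : IsWangTiling S f)
    (hp : WangPeriodic f) :
    ∃ g : ℤ × ℤ → WangTile, ∃ A : ℤ, 0 < A ∧ IsWangTiling S g ∧ ∀ p, g (p + (A, 0)) = g p := by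
  obtain ⟨a, b, hb | ⟨rfl, ha⟩, hper⟩ := exists_period_of_wangPeriodic hp
  · obtain ⟨c, P, hP, hcol⟩ := exists_periodic_columns hf hb a.natAbs
    rw [Int.natCast_natAbs] at hcol
    exact ⟨_, P, hP, isWangTiling_foldTiling hf hb hP hper hcol,
      foldTiling_add_horizontal a c hb hP⟩
  · exact ⟨f, a, ha, hf, hper⟩

end Periodicity

namespace KariCulik

def culikSet : Finset WangTile :=
  {(1, 0, 1, 3), (1, 0, 0, 1), (0, 0, 0, 3), (1, 3, 0, 1), (0, 1, 1, 1), (1, 1, 1, 2), (0, 1, 0, 2),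
    (2, 1, 3, 0), (3, 1, 4, 0), (4, 1, 2, 1), (2, 2, 4, 0), (3, 2, 2, 1), (4, 2, 3, 1)}

lemma card_culikSet : culikSet.card = 13 := by decide

/-- Colour `3` is Culik's second copy of the digit `0`, used in rows whose real number exceeds
`2/3`. -/
noncomputable def digitColour (d : ℤ) (high : Prop) [Decidable high] : ℕ :=
  if d = 0 ∧ high then 3 else d.toNat

lemma mem_culikSet_of_double {c c' d d' : ℤ} {high high' : Prop} [Decidable high]
    [Decidable high'] (hhigh' : high') (hc : 0 ≤ c ∧ c ≤ 1) (hc' : 0 ≤ c' ∧ c' ≤ 1)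
    (hd : 0 ≤ d ∧ d ≤ 1) (hd' : 0 ≤ d' ∧ d' ≤ 2)
    (hrel : d' + c' = 2 * d + c) (hforce : d = 0 → high → c = 1 ∧ c' = 0) :
    (c.toNat, digitColour d high, c'.toNat, digitColour d' high') ∈ culikSet := by
  obtain ⟨hc0, hc1⟩ := hc; obtain ⟨hc0', hc1'⟩ := hc'
  obtain ⟨hd0, hd1⟩ := hd; obtain ⟨hd0', hd1'⟩ := hd'
  interval_cases c <;> interval_cases c' <;> interval_cases d <;> interval_cases d' <;>
    simp_all [digitColour, culikSet]
  all_goals by_cases high <;> simp_all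

lemma mem_culikSet_of_third {c c' d d' : ℤ} {high high' : Prop} [Decidable high]
    [Decidable high'] (hhigh' : ¬ high') (hc : 2 ≤ c ∧ c ≤ 4) (hc' : 2 ≤ c' ∧ c' ≤ 4)
    (hd : 1 ≤ d ∧ d ≤ 2) (hd' : 0 ≤ d' ∧ d' ≤ 1)
    (hrel : 3 * d' + c' = d + c) :
    (c.toNat, digitColour d high, c'.toNat, digitColour d' high') ∈ culikSet := by
  obtain ⟨hc0, hc1⟩ := hc; obtain ⟨hc0', hc1'⟩ := hc'
  obtain ⟨hd0, hd1⟩ := hd; obtain ⟨hd0', hd1'⟩ := hd'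
  interval_cases c <;> interval_cases c' <;> interval_cases d <;> interval_cases d' <;>
    simp_all [digitColour, culikSet]

section KariTiling

variable (x : ℤ → ℝ)

noncomputable def rowDigit (y i : ℤ) : ℤ := beatty (x y) (i + 1) - beatty (x y) i

/-- The horizontal colour: the carry of multiplying row `y` by `2` (colours `0, 1`) or by `1/3`
(colours `2, 3, 4`). -/
noncomputable def carry (y i : ℤ) : ℤ :=
  if x y ≤ 1 then 2 * beatty (x y) i - beatty (x (y + 1)) i + 1
  else beatty (x y) i - 3 * beatty (x (y + 1)) i + 2

noncomputable def kariTiling (p : ℤ × ℤ) : WangTile :=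
  ((carry x p.2 p.1).toNat, digitColour (rowDigit x p.2 p.1) (2 / 3 < x p.2),
    (carry x p.2 (p.1 + 1)).toNat, digitColour (rowDigit x (p.2 + 1) p.1) (2 / 3 < x (p.2 + 1)))

variable {x} (hx : ∀ y, x y ∈ Set.Ioc (1 / 3) 2)
  (hstep : ∀ y, x (y + 1) = if x y ≤ 1 then 2 * x y else x y / 3)
include hx hstep

lemma kariTiling_mem_of_le_one {y : ℤ} (h : x y ≤ 1) (i : ℤ) :
    kariTiling x (i, y) ∈ culikSet := by
  have hnext : x (y + 1) = 2 * x y := by rw [hstep, if_pos h]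
  obtain ⟨hx0, -⟩ := hx y
  have hdiv : ∀ j, beatty (x y) j = beatty (x (y + 1)) j / 2 := fun j => by
    rw [hnext, ← beatty_natCast_mul_div (x y) two_ne_zero j]; norm_num
  have hc : ∀ j, 0 ≤ carry x y j ∧ carry x y j ≤ 1 := fun j => by
    simp only [carry, if_pos h, hdiv j]; omega
  refine mem_culikSet_of_double (by linarith) (hc i) (hc (i + 1))
    (beatty_succ_sub_mem_Icc (by push_cast; linarith) (by exact_mod_cast h) i)
    (beatty_succ_sub_mem_Icc (by push_cast; linarith) (by push_cast; linarith) i)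
    (by simp only [rowDigit, carry, if_pos h]; ring) fun hzero hhigh => ?_
  obtain ⟨e₀, e₁⟩ := beatty_two_mul_of_beatty_succ_eq hhigh (sub_eq_zero.1 hzero)
  simp only [carry, if_pos h, hnext, e₀, e₁, sub_eq_zero.1 hzero]
  constructor <;> ring

lemma kariTiling_mem_of_one_lt {y : ℤ} (h : ¬ x y ≤ 1) (i : ℤ) :
    kariTiling x (i, y) ∈ culikSet := by
  have hnext : x (y + 1) = x y / 3 := by rw [hstep, if_neg h]
  obtain ⟨-, hx2⟩ := hx y
  obtain ⟨hx0', -⟩ := hx (y + 1)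
  have hdiv : ∀ j, beatty (x (y + 1)) j = beatty (x y) j / 3 := fun j => by
    rw [← beatty_natCast_mul_div (x (y + 1)) three_ne_zero j, hnext]; norm_num; ring_nf
  have hc : ∀ j, 2 ≤ carry x y j ∧ carry x y j ≤ 4 := fun j => by
    simp only [carry, if_neg h, hdiv j]; omega
  exact mem_culikSet_of_third (by linarith) (hc i) (hc (i + 1))
    (beatty_succ_sub_mem_Icc (by push_cast; linarith) (by push_cast; linarith) i)
    (beatty_succ_sub_mem_Icc (by push_cast; linarith) (by push_cast; linarith) i)
    (by simp only [rowDigit, carry, if_neg h]; ring)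

lemma isWangTiling_kariTiling : IsWangTiling culikSet (kariTiling x) := by
  refine ⟨fun ⟨i, y⟩ => ?_, fun _ _ => ⟨rfl, rfl⟩⟩
  by_cases h : x y ≤ 1
  · exact kariTiling_mem_of_le_one hx hstep h i
  · exact kariTiling_mem_of_one_lt hx hstep h i

end KariTiling

noncomputable def kariStep : Equiv.Perm (Set.Ioc (1 / 3 : ℝ) 2) where
  toFun α := if h : (α : ℝ) ≤ 1 then ⟨2 * α, by constructor <;> linarith [α.2.1]⟩
    else ⟨α / 3, by constructor <;> linarith [α.2.2]⟩
  invFun α := if h : 2 / 3 < (α : ℝ) then ⟨α / 2, by constructor <;> linarith [α.2.2]⟩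
    else ⟨3 * α, by constructor <;> linarith [α.2.1]⟩
  left_inv α := by
    obtain ⟨α, h₁, h₂⟩ := α
    by_cases h : α ≤ 1
    · simp [h, show 2 / 3 < 2 * α by linarith]
    · simp [h, show ¬ 2 / 3 < α / 3 by linarith, mul_div_cancel₀]
  right_inv α := by
    obtain ⟨α, h₁, h₂⟩ := α
    by_cases h : 2 / 3 < α
    · simp [h, show α / 2 ≤ 1 by linarith, mul_div_cancel₀]
    · simp [h, show ¬ 3 * α ≤ 1 by linarith]

lemma coe_kariStep (α : Set.Ioc (1 / 3 : ℝ) 2) :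
    (kariStep α : ℝ) = if (α : ℝ) ≤ 1 then 2 * (α : ℝ) else (α : ℝ) / 3 := by
  simp only [kariStep, Equiv.coe_fn_mk]
  split_ifs <;> rfl

noncomputable def kariOrbit (y : ℤ) : ℝ := ((kariStep ^ y) ⟨1, by norm_num, by norm_num⟩ : ℝ)

lemma kariOrbit_mem (y : ℤ) : kariOrbit y ∈ Set.Ioc (1 / 3) 2 := Subtype.prop _

lemma kariOrbit_succ (y : ℤ) :
    kariOrbit (y + 1) = if kariOrbit y ≤ 1 then 2 * kariOrbit y else kariOrbit y / 3 := by
  rw [kariOrbit, kariOrbit, add_comm, zpow_add, zpow_one, Equiv.Perm.mul_apply, coe_kariStep]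

def colourDigit (c : ℕ) : ℤ := if c = 3 then 0 else c

lemma colourDigit_nonneg (c : ℕ) : 0 ≤ colourDigit c := by
  unfold colourDigit; split_ifs <;> omega

lemma west_lt_two_iff_east_lt_two : ∀ t ∈ culikSet, t.west < 2 ↔ t.east < 2 := by decide

lemma colourDigit_south_le_two : ∀ t ∈ culikSet, colourDigit t.south ≤ 2 := by decide

lemma colourDigit_double_of_west_lt_two : ∀ t ∈ culikSet, t.west < 2 →
    colourDigit t.north + t.east = 2 * colourDigit t.south + t.west := by decide

lemma colourDigit_third_of_not_west_lt_two : ∀ t ∈ culikSet, ¬ t.west < 2 →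
    3 * colourDigit t.north + t.east = colourDigit t.south + t.west := by decide

lemma north_eq_three_of_colourDigit_eq_zero : ∀ t ∈ culikSet,
    colourDigit t.south = 0 → colourDigit t.north = 0 → t.north = 3 := by decide

lemma west_east_of_south_eq_three : ∀ t ∈ culikSet, t.south = 3 → t.west = 1 ∧ t.east = 0 := by
  decide

def rowSum (f : ℤ × ℤ → WangTile) (n : ℕ) (k : ℤ) : ℤ :=
  ∑ j ∈ Finset.range n, colourDigit (f (j, k)).south

section Aperiodicity

variable {f : ℤ × ℤ → WangTile}

lemma rowSum_eq_zero_iff {n : ℕ} {k : ℤ} :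
    rowSum f n k = 0 ↔ ∀ j < n, colourDigit (f (j, k)).south = 0 := by
  simp [rowSum, Finset.sum_eq_zero_iff_of_nonneg fun j _ => colourDigit_nonneg _]

variable (hf : IsWangTiling culikSet f)
include hf

/-- Colour `3` forbids zero digits in a `2 × 2` square: the upper row would carry `0` out of one
tile and `1` into the next. -/
lemma false_of_colourDigit_eq_zero_square {i k : ℤ} (h₁ : colourDigit (f (i, k)).south = 0)
    (h₂ : colourDigit (f (i, k + 1)).south = 0) (h₃ : colourDigit (f (i + 1, k)).south = 0)
    (h₄ : colourDigit (f (i + 1, k + 1)).south = 0) : False := by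
  have hthree : ∀ j, colourDigit (f (j, k)).south = 0 → colourDigit (f (j, k + 1)).south = 0 →
      (f (j, k + 1)).south = 3 := fun j hs hn => by
    rw [← (hf.2 j k).2] at hn ⊢
    exact north_eq_three_of_colourDigit_eq_zero _ (hf.1 _) hs hn
  have he := (hf.2 i (k + 1)).1
  rw [(west_east_of_south_eq_three _ (hf.1 _) (hthree i h₁ h₂)).2,
    (west_east_of_south_eq_three _ (hf.1 _) (hthree (i + 1) h₃ h₄)).1] at he
  exact absurd he (by norm_num)

lemma west_lt_two_iff_of_row (k : ℤ) (j : ℕ) : (f (j, k)).west < 2 ↔ (f (0, k)).west < 2 := by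
  induction j with
  | zero => rfl
  | succ j ih =>
    rw [← ih, Nat.cast_succ, ← (hf.2 j k).1]
    exact (west_lt_two_iff_east_lt_two _ (hf.1 _)).symm

lemma rowSum_mem_Icc (n : ℕ) (k : ℤ) : rowSum f n k ∈ Set.Icc 0 (2 * (n : ℤ)) := by
  refine ⟨Finset.sum_nonneg fun j _ => colourDigit_nonneg _, ?_⟩
  calc rowSum f n k ≤ ∑ _j ∈ Finset.range n, (2 : ℤ) :=
        Finset.sum_le_sum fun j _ => colourDigit_south_le_two _ (hf.1 _)
    _ = 2 * n := by simp [mul_comm]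

variable {n : ℕ} (hper : ∀ p, f (p + ((n : ℤ), 0)) = f p)
include hper

lemma rowSum_succ (k : ℤ) :
    rowSum f n (k + 1) = 2 * rowSum f n k ∨ 3 * rowSum f n (k + 1) = rowSum f n k := by
  have hnorth : rowSum f n (k + 1) = ∑ j ∈ Finset.range n, colourDigit (f (j, k)).north :=
    Finset.sum_congr rfl fun j _ => by rw [(hf.2 j k).2]
  have heast : ∀ j : ℕ, ((f (j, k)).east : ℤ) = (f ((j + 1 : ℕ), k)).west := fun j => by
    rw [(hf.2 j k).1, Nat.cast_succ]
  have hw : ((f (n, k)).west : ℤ) = (f ((0 : ℕ), k)).west := by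
    simpa [Prod.mk_add_mk] using congrArg (fun t : WangTile => (t.west : ℤ)) (hper (0, k))
  by_cases hrow : (f (0, k)).west < 2
  · left
    rw [hnorth, rowSum, Finset.mul_sum]
    refine sum_range_eq_of_telescope (w := fun j : ℕ => ((f (j, k)).west : ℤ)) (fun j => ?_) hw
    rw [← heast]
    exact colourDigit_double_of_west_lt_two _ (hf.1 _) ((west_lt_two_iff_of_row hf k j).2 hrow)
  · right
    rw [hnorth, rowSum, Finset.mul_sum]
    refine sum_range_eq_of_telescope (w := fun j : ℕ => ((f (j, k)).west : ℤ)) (fun j => ?_) hw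
    rw [← heast]
    exact colourDigit_third_of_not_west_lt_two _ (hf.1 _)
      (mt (west_lt_two_iff_of_row hf k j).1 hrow)

lemma rowSum_ne_zero (hn : 0 < n) (k : ℤ) : rowSum f n k ≠ 0 := by
  intro h₀
  have h₁ : rowSum f n (k + 1) = 0 := by rcases rowSum_succ hf hper k with h | h <;> omega
  have hwrap : ∀ k', f (n, k') = f (0, k') := fun k' => by
    simpa [Prod.mk_add_mk] using hper (0, k')
  have hlast : ((n - 1 : ℕ) : ℤ) = n - 1 := by omega
  rw [rowSum_eq_zero_iff] at h₀ h₁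
  apply false_of_colourDigit_eq_zero_square hf (i := n - 1) (k := k)
  · simpa [hlast] using h₀ (n - 1) (by omega)
  · simpa [hlast] using h₁ (n - 1) (by omega)
  · simpa [hwrap] using h₀ 0 hn
  · simpa [hwrap] using h₁ 0 hn

theorem false_of_horizontal_period (hn : 0 < n) : False := by
  obtain ⟨m₁, m₂, hlt, heq⟩ := (Set.finite_Icc 0 (2 * (n : ℤ))).exists_lt_map_eq_of_forall_mem
    (f := fun m : ℕ => rowSum f n m) fun m => rowSum_mem_Icc hf n m
  exact ne_of_lt_of_double_or_third (u := fun m : ℕ => rowSum f n m)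
    (fun k => by simpa using rowSum_succ hf hper k) (fun k => rowSum_ne_zero hf hper hn k) hlt heq

end Aperiodicity

end KariCulik

/-- **Kari–Culik.** There exists an aperiodic Wang tile set consisting of exactly 13 tiles. -/
theorem exists_aperiodic_wang_tile_set_card_thirteen :
    ∃ S : Finset WangTile, S.card = 13 ∧ WangAperiodic S := by
  refine ⟨KariCulik.culikSet, KariCulik.card_culikSet,
    ⟨_, KariCulik.isWangTiling_kariTiling KariCulik.kariOrbit_mem KariCulik.kariOrbit_succ⟩,
    fun f hf hp => ?_⟩
  obtain ⟨g, A, hA, hg, hper⟩ := exists_horizontally_periodic_of_wangPeriodic hf hp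
  lift A to ℕ using hA.le
  exact KariCulik.false_of_horizontal_period hg hper (by exact_mod_cast hA)
end

section
/- The set of Wang tile sets that do NOT admit a tiling of the plane is computably (recursively) enumerable: there is a partial computable function on the codes of Wang tile sets, encoded as finite lists of quadruples of natural numbers, whose domain is exactly the set of codes of Wang tile sets admitting no tiling of the plane. -/
section WordsOfLength

variable {α : Type*}

def wordsOfLength (l : List α) : ℕ → List (List α)
  | 0 => [[]]
  | n + 1 => (wordsOfLength l n).flatMap fun w => l.map (· :: w)

theorem mem_wordsOfLength {l : List α} {n : ℕ} {w : List α} :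
    w ∈ wordsOfLength l n ↔ w.length = n ∧ ∀ a ∈ w, a ∈ l := by
  induction n generalizing w with
  | zero =>
    simp only [wordsOfLength, List.mem_singleton, List.length_eq_zero_iff]
    exact ⟨fun h => ⟨h, by simp [h]⟩, And.left⟩
  | succ n ih =>
    cases w with
    | nil => simp [wordsOfLength]
    | cons a w => simp [wordsOfLength, ih, and_comm, and_left_comm]

open Primrec in
theorem primrec₂_wordsOfLength [Primcodable α] : Primrec₂ (wordsOfLength (α := α)) := by
  have step : Primrec₂ fun (q : List α × ℕ) (p : ℕ × List (List α)) =>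
      p.2.flatMap fun w => q.1.map (· :: w) :=
    list_flatMap (snd.comp snd)
      (list_map (fst.comp (fst.comp fst)) (list_cons.comp snd (snd.comp fst)).to₂).to₂
  refine (nat_rec' snd (const [[]]) step).to₂.of_eq fun l n => ?_
  induction n with
  | zero => rfl
  | succ n ih => simp only [wordsOfLength, ← ih]

end WordsOfLength

theorem wangMatchAt_comp_add (f : ℤ × ℤ → WangTile) (a b x y : ℤ) :
    WangMatchAt (fun p => f (p + (a, b))) x y ↔ WangMatchAt f (x + a) (y + b) := by
  simp only [WangMatchAt, Prod.mk_add_mk, add_right_comm]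

section Grid

/-- A grid is a list of rows: `gridCell P x y` is the tile in column `x` of row `y`
(and `default` outside the grid). -/
def gridCell (P : List (List WangTile)) (x y : ℕ) : WangTile :=
  (P.getD y []).getD x default

def GridMatchAt (P : List (List WangTile)) (x y : ℕ) : Prop :=
  (gridCell P x y).east = (gridCell P (x + 1) y).west ∧
    (gridCell P x y).north = (gridCell P x (y + 1)).south

/-- The grid has side `m + 1`, so that its last row and column are checked only as neighbours. -/
def HasValidGrid (l : List WangTile) (m : ℕ) : Prop :=
  ∃ P ∈ wordsOfLength (wordsOfLength l (m + 1)) (m + 1), ∀ x < m, ∀ y < m, GridMatchAt P x y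

theorem gridCell_map_range (g : ℕ → ℕ → WangTile) {k x y : ℕ} (hx : x < k) (hy : y < k) :
    gridCell ((List.range k).map fun y => (List.range k).map fun x => g x y) x y = g x y := by
  simp [gridCell, hx, hy]

theorem gridCell_mem {l : List WangTile} {k : ℕ} {P : List (List WangTile)}
    (hP : P ∈ wordsOfLength (wordsOfLength l k) k) {x y : ℕ} (hx : x < k) (hy : y < k) :
    gridCell P x y ∈ l := by
  obtain ⟨hlen, hrows⟩ := mem_wordsOfLength.1 hP
  obtain ⟨hrow_len, hrow⟩ := mem_wordsOfLength.1 (hrows _ (List.getElem_mem (hlen ▸ hy)))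
  simp only [gridCell, List.getD_eq_getElem _ _ (hlen ▸ hy),
    List.getD_eq_getElem _ _ (hrow_len ▸ hx)]
  exact hrow _ (List.getElem_mem _)

theorem hasValidGrid_of_isWangTilingL {l : List WangTile} {f : ℤ × ℤ → WangTile}
    (hf : IsWangTilingL l f) (m : ℕ) : HasValidGrid l m := by
  let g : ℕ → ℕ → WangTile := fun x y => f (x, y)
  refine ⟨(List.range (m + 1)).map fun y => (List.range (m + 1)).map fun x => g x y, ?_, ?_⟩
  · simp only [mem_wordsOfLength, List.length_map, List.length_range, List.mem_map,
      forall_exists_index, and_imp, true_and]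
    rintro _ y - rfl
    simpa using fun x _ => hf.1 _
  · intro x hx y hy
    simp only [GridMatchAt, gridCell_map_range g (by omega : x < m + 1) (by omega : y < m + 1),
      gridCell_map_range g (by omega : x + 1 < m + 1) (by omega : y < m + 1),
      gridCell_map_range g (by omega : x < m + 1) (by omega : y + 1 < m + 1), g]
    exact_mod_cast hf.2 x y

/-- The grid is extended to the plane by repeating its last row and column. -/
theorem exists_wangMatchAt_of_hasValidGrid {l : List WangTile} {m : ℕ} (h : HasValidGrid l m) :
    ∃ f : ℤ × ℤ → WangTile, (∀ p, f p ∈ l) ∧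
      ∀ x y : ℤ, 0 ≤ x → x < m → 0 ≤ y → y < m → WangMatchAt f x y := by
  obtain ⟨P, hP, hmatch⟩ := h
  refine ⟨fun p => gridCell P (min p.1.toNat m) (min p.2.toNat m),
    fun p => gridCell_mem hP (by omega) (by omega), fun x y hx0 hx hy0 hy => ?_⟩
  have := hmatch x.toNat (by omega) y.toNat (by omega)
  simp only [WangMatchAt]
  have hx1 : (x + 1).toNat = x.toNat + 1 := by omega
  have hy1 : (y + 1).toNat = y.toNat + 1 := by omega
  rwa [min_eq_left (by omega), min_eq_left (by omega), hx1, hy1, min_eq_left (by omega),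
    min_eq_left (by omega)]

end Grid

section Compactness

theorem isClosed_setOf_wangMatchAt {l : List WangTile} [TopologicalSpace {t // t ∈ l}]
    [DiscreteTopology {t // t ∈ l}] (x y : ℤ) :
    IsClosed {f : ℤ × ℤ → {t // t ∈ l} | WangMatchAt (Subtype.val ∘ f) x y} :=
  (isClosed_discrete {c : {t // t ∈ l} × {t // t ∈ l} × {t // t ∈ l} |
      c.1.1.east = c.2.1.1.west ∧ c.1.1.north = c.2.2.1.south}).preimage
    (show Continuous fun f : ℤ × ℤ → {t // t ∈ l} => (f (x, y), f (x + 1, y), f (x, y + 1)) by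
      fun_prop)

theorem exists_isWangTilingL_of_forall_box {l : List WangTile}
    (h : ∀ n : ℕ, ∃ f : ℤ × ℤ → WangTile, (∀ p, f p ∈ l) ∧
      ∀ x y : ℤ, |x| ≤ n → |y| ≤ n → WangMatchAt f x y) :
    ∃ f, IsWangTilingL l f := by
  let _ : TopologicalSpace {t // t ∈ l} := ⊥
  have : DiscreteTopology {t // t ∈ l} := ⟨rfl⟩
  have : Finite {t // t ∈ l} := l.finite_toSet.to_subtype
  let V : ℕ → Set (ℤ × ℤ → {t // t ∈ l}) := fun n =>
    ⋂ (x : ℤ) (y : ℤ) (_ : |x| ≤ n) (_ : |y| ≤ n),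
      {f | WangMatchAt (Subtype.val ∘ f) x y}
  have hV_closed (n : ℕ) : IsClosed (V n) :=
    isClosed_iInter fun x => isClosed_iInter fun y => isClosed_iInter fun _ =>
      isClosed_iInter fun _ => isClosed_setOf_wangMatchAt x y
  have hV_succ (n : ℕ) : V (n + 1) ⊆ V n := by
    simp only [V, Set.subset_def, Set.mem_iInter]
    exact fun f hf x y hx hy => hf x y (by push_cast; omega) (by push_cast; omega)
  have hV_nonempty (n : ℕ) : (V n).Nonempty := by
    obtain ⟨f, hfl, hf⟩ := h n
    exact ⟨fun p => ⟨f p, hfl p⟩, Set.mem_iInter.2 fun x => Set.mem_iInter.2 fun y =>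
      Set.mem_iInter₂.2 fun hx hy => hf x y hx hy⟩
  obtain ⟨f, hf⟩ := IsCompact.nonempty_iInter_of_sequence_nonempty_isCompact_isClosed V hV_succ
    hV_nonempty (hV_closed 0).isCompact hV_closed
  simp only [V, Set.mem_iInter] at hf
  refine ⟨fun p => (f p).1, fun p => (f p).2, fun x y => hf (max x.natAbs y.natAbs) x y ?_ ?_⟩
  · rw [Int.abs_eq_natAbs]; exact_mod_cast le_max_left _ _
  · rw [Int.abs_eq_natAbs]; exact_mod_cast le_max_right _ _

end Compactness

theorem exists_box_of_hasValidGrid {l : List WangTile} (n : ℕ) (h : HasValidGrid l (2 * n + 1)) :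
    ∃ f : ℤ × ℤ → WangTile, (∀ p, f p ∈ l) ∧
      ∀ x y : ℤ, |x| ≤ n → |y| ≤ n → WangMatchAt f x y := by
  obtain ⟨f, hfl, hf⟩ := exists_wangMatchAt_of_hasValidGrid h
  refine ⟨fun p => f (p + ((n : ℤ), (n : ℤ))), fun p => hfl _, fun x y hx hy => ?_⟩
  rw [abs_le] at hx hy
  exact (wangMatchAt_comp_add f n n x y).2
    (hf _ _ (by omega) (by push_cast; omega) (by omega) (by push_cast; omega))

theorem exists_isWangTilingL_iff_forall_hasValidGrid (l : List WangTile) :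
    (∃ f, IsWangTilingL l f) ↔ ∀ m, HasValidGrid l m :=
  ⟨fun ⟨_, hf⟩ => hasValidGrid_of_isWangTilingL hf, fun h =>
    exists_isWangTilingL_of_forall_box fun n => exists_box_of_hasValidGrid n (h _)⟩

section Computability

open Primrec

theorem ComputablePred.rePred_exists_nat {α : Type*} [Primcodable α] {p : α → ℕ → Prop}
    (hp : ComputablePred fun q : α × ℕ => p q.1 q.2) : REPred fun a => ∃ n, p a n := by
  classical
  have search : Partrec fun a => Nat.rfind fun n => Part.some (decide (p a n)) :=
    Partrec.rfind hp.decide.partrec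
  refine (search.map (Computable.const ()).to₂).of_eq fun a => Part.ext fun u => ?_
  simp only [Part.mem_map_iff, Part.mem_assert_iff, Part.mem_some_iff, exists_prop, and_true]
  rw [← Part.dom_iff_mem]
  exact Nat.rfind_dom.trans (by simp)

theorem primrec_gridCell :
    Primrec fun q : List (List WangTile) × ℕ × ℕ => gridCell q.1 q.2.1 q.2.2 :=
  (list_getD default).comp ((list_getD []).comp fst (snd.comp snd)) (fst.comp snd)

theorem primrecPred_gridMatchAt :
    PrimrecPred fun q : List (List WangTile) × ℕ × ℕ => GridMatchAt q.1 q.2.1 q.2.2 := by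
  have east : Primrec WangTile.east := fst.comp (snd.comp snd)
  have west : Primrec WangTile.west := fst
  have north : Primrec WangTile.north := snd.comp (snd.comp snd)
  have south : Primrec WangTile.south := fst.comp snd
  have hright : Primrec fun q : List (List WangTile) × ℕ × ℕ => (q.1, q.2.1 + 1, q.2.2) :=
    pair fst (pair (succ.comp (fst.comp snd)) (snd.comp snd))
  have hup : Primrec fun q : List (List WangTile) × ℕ × ℕ => (q.1, q.2.1, q.2.2 + 1) :=
    pair fst (pair (fst.comp snd) (succ.comp (snd.comp snd)))
  exact
    (Primrec.eq.comp (east.comp primrec_gridCell) (west.comp (primrec_gridCell.comp hright))).and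
      (Primrec.eq.comp (north.comp primrec_gridCell) (south.comp (primrec_gridCell.comp hup)))

theorem primrecRel_hasValidGrid : PrimrecRel HasValidGrid := by
  have column : PrimrecRel fun (ys : List ℕ) (q : List (List WangTile) × ℕ) =>
      ∀ y ∈ ys, GridMatchAt q.1 q.2 y :=
    PrimrecRel.forall_mem_list <| primrecPred_gridMatchAt.comp (pair (fst.comp snd)
      (pair (snd.comp snd) fst))
  have valid : PrimrecRel fun (xs : List ℕ) (q : List (List WangTile) × ℕ) =>
      ∀ x ∈ xs, ∀ y ∈ List.range q.2, GridMatchAt q.1 x y :=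
    PrimrecRel.forall_mem_list <| column.comp (list_range.comp (snd.comp snd))
      (pair (fst.comp snd) fst)
  have candidates : Primrec fun p : List WangTile × ℕ =>
      wordsOfLength (wordsOfLength p.1 (p.2 + 1)) (p.2 + 1) :=
    primrec₂_wordsOfLength.comp (primrec₂_wordsOfLength.comp fst (succ.comp snd)) (succ.comp snd)
  have square : PrimrecRel fun (P : List (List WangTile)) (m : ℕ) =>
      ∀ x ∈ List.range m, ∀ y ∈ List.range m, GridMatchAt P x y :=
    valid.comp (list_range.comp snd) (pair fst snd)
  exact ((PrimrecRel.exists_mem_list square).comp candidates snd).of_eq fun p => by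
    simp [HasValidGrid]

end Computability

/-- The set of (list-encoded) Wang tile sets that do **not** admit a tiling of the plane is
computably enumerable: it is the domain of a partial computable function. -/
theorem non_tiling_wang_sets_re :
    ∃ F : List WangTile →. Unit, Partrec F ∧
      ∀ l : List WangTile, (F l).Dom ↔ ¬ ∃ f, IsWangTilingL l f := by
  have hre : REPred fun l => ∃ m, ¬ HasValidGrid l m :=
    ComputablePred.rePred_exists_nat primrecRel_hasValidGrid.not.computablePred
  refine ⟨_, hre, fun l => ?_⟩
  rw [exists_isWangTilingL_iff_forall_hasValidGrid, not_forall]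
  exact ⟨fun ⟨h, _⟩ => h, fun h => ⟨h, trivial⟩⟩
end
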